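/- arXiv:2207.04143 — 5 statements merged into one kernel-verified Lean document; each statement's English description precedes it below -/
import Mathlib

section
/- For all x ≥ 0 and λ ≥ 0, with probability at least 1 − e^{−x} it holds simultaneously for all n ∈ ℕ that Σ_{i=1}^n λ Z_i ≤ x + Σ_{i=1}^n ( λ μ_i + ψ_i(λ) ). -/
/-!
The process `M_n = exp (∑_{i ≤ n} (λ (Z_i - μ_i) - ψ_i(λ)))` is a nonnegative martingale with
`M_0 = 1`: each factor `exp (λ (Z_i - μ_i) - ψ_i(λ))` has conditional expectation one given
`H_{i-1}`. By Ville's inequality (Doob's maximal inequality as the horizon tends to infinity)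
`M` ever reaches `e^x` with probability at most `e^{-x}`, and off that event taking logarithms
gives the inequality simultaneously for all `n`. Integrability of `M_n` is not automatic, since
`μ_i` and `ψ_i` are unbounded; it follows from pulling the `H_{i-1}`-measurable factor out of a
Lebesgue integral, where no integrability is needed.
-/

open MeasureTheory Finset
open scoped ENNReal NNReal

section ConditionalExpectation

variable {Ω : Type*} {m m0 : MeasurableSpace Ω} {μ : Measure Ω}

theorem lintegral_mul_ofReal_condExp (hm : m ≤ m0) [SigmaFinite (μ.trim hm)]
    {g : Ω → ℝ≥0∞} (hg : Measurable[m] g) {f : Ω → ℝ} (hf : Integrable f μ) (hf0 : 0 ≤ᵐ[μ] f) :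
    ∫⁻ ω, g ω * ENNReal.ofReal (μ[f|m] ω) ∂μ = ∫⁻ ω, g ω * ENNReal.ofReal (f ω) ∂μ := by
  -- The measures with densities `f` and `μ[f|m]` agree on `m`, which is all `g` sees.
  have htrim : (μ.withDensity fun ω => ENNReal.ofReal (μ[f|m] ω)).trim hm
      = (μ.withDensity fun ω => ENNReal.ofReal (f ω)).trim hm := by
    refine @Measure.ext _ m _ _ fun s hs => ?_
    rw [trim_measurableSet_eq hm hs, trim_measurableSet_eq hm hs,
      withDensity_apply _ (hm s hs), withDensity_apply _ (hm s hs),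
      ← ofReal_integral_eq_lintegral_ofReal integrable_condExp.integrableOn
        (ae_restrict_of_ae (condExp_nonneg hf0)),
      ← ofReal_integral_eq_lintegral_ofReal hf.integrableOn (ae_restrict_of_ae hf0),
      setIntegral_condExp hm hf hs]
  have hmul : ∀ h : Ω → ℝ, AEMeasurable h μ →
      ∫⁻ ω, g ω * ENNReal.ofReal (h ω) ∂μ
        = ∫⁻ ω, g ω ∂(μ.withDensity fun ω => ENNReal.ofReal (h ω)).trim hm := by
    intro h hh
    rw [lintegral_trim hm (μ := μ.withDensity fun ω => ENNReal.ofReal (h ω)) hg,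
      lintegral_withDensity_eq_lintegral_mul₀ hh.ennreal_ofReal (hg.mono hm le_rfl).aemeasurable]
    simp_rw [Pi.mul_apply, mul_comm]
  rw [hmul _ integrable_condExp.aemeasurable, hmul _ hf.aemeasurable, htrim]

theorem integrable_mul_of_integrable_mul_condExp (hm : m ≤ m0) [SigmaFinite (μ.trim hm)]
    {f g : Ω → ℝ} (hg : StronglyMeasurable[m] g) (hg0 : 0 ≤ g) (hf : Integrable f μ)
    (hf0 : 0 ≤ᵐ[μ] f) (hgf : Integrable (g * μ[f|m]) μ) : Integrable (g * f) μ := by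
  refine ⟨(hg.mono hm).aestronglyMeasurable.mul hf.aestronglyMeasurable, ?_⟩
  have hgf0 : 0 ≤ᵐ[μ] g * f := by filter_upwards [hf0] with ω hω using mul_nonneg (hg0 ω) hω
  have hgcf0 : 0 ≤ᵐ[μ] g * μ[f|m] := by
    filter_upwards [condExp_nonneg (m := m) hf0] with ω hω using mul_nonneg (hg0 ω) hω
  rw [hasFiniteIntegral_iff_ofReal hgf0]
  calc ∫⁻ ω, ENNReal.ofReal ((g * f) ω) ∂μ
      = ∫⁻ ω, ENNReal.ofReal (g ω) * ENNReal.ofReal (f ω) ∂μ := by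
        simp_rw [Pi.mul_apply, ENNReal.ofReal_mul (hg0 _)]
    _ = ∫⁻ ω, ENNReal.ofReal (g ω) * ENNReal.ofReal (μ[f|m] ω) ∂μ :=
        (lintegral_mul_ofReal_condExp hm hg.measurable.ennreal_ofReal hf hf0).symm
    _ = ∫⁻ ω, ENNReal.ofReal ((g * μ[f|m]) ω) ∂μ := by
        simp_rw [Pi.mul_apply, ENNReal.ofReal_mul (hg0 _)]
    _ < ⊤ := (hasFiniteIntegral_iff_ofReal hgcf0).mp hgf.2

theorem exp_condExp_le_condExp_exp (hm : m ≤ m0) [SigmaFinite (μ.trim hm)] {f : Ω → ℝ}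
    (hf : Integrable f μ) (hexp : Integrable (fun ω => Real.exp (f ω)) μ) :
    ∀ᵐ ω ∂μ, Real.exp (μ[f|m] ω) ≤ μ[fun ω => Real.exp (f ω)|m] ω :=
  convexOn_exp.map_condExp_le_univ hm Real.continuous_exp.lowerSemicontinuous hf hexp

theorem exp_mul_condExp_le_condExp_exp_mul (hm : m ≤ m0) [SigmaFinite (μ.trim hm)] {f : Ω → ℝ}
    (c : ℝ) (hf : Integrable f μ) (hexp : Integrable (fun ω => Real.exp (c * f ω)) μ) :
    ∀ᵐ ω ∂μ, Real.exp (c * μ[f|m] ω) ≤ μ[fun ω => Real.exp (c * f ω)|m] ω := by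
  filter_upwards [exp_condExp_le_condExp_exp hm (hf.const_mul c) hexp,
    condExp_smul (m := m) (μ := μ) c f] with ω hjensen hsmul
  simpa [← smul_eq_mul, ← Pi.smul_def, hsmul] using hjensen

theorem integrable_exp_mul_sub_condExp (hm : m ≤ m0) [SigmaFinite (μ.trim hm)] {f : Ω → ℝ}
    (hexp : ∀ c : ℝ, Integrable (fun ω => Real.exp (c * f ω)) μ) (l : ℝ) :
    Integrable (fun ω => Real.exp (l * (f ω - μ[f|m] ω))) μ := by
  have hf : Integrable f μ :=
    ProbabilityTheory.integrable_of_mem_interior_integrableExpSet (by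
      simp [ProbabilityTheory.integrableExpSet, hexp])
  -- AM-GM bounds `exp (l (f - μ[f|m]))` by `(exp (2 l f) + exp (-2 l μ[f|m])) / 2`,
  -- and Jensen makes the second term integrable.
  have hcond : Integrable (fun ω => Real.exp (-(2 * l) * μ[f|m] ω)) μ := by
    refine (integrable_condExp (m := m) (f := fun ω => Real.exp (-(2 * l) * f ω))).mono'
      (Real.continuous_exp.comp_aestronglyMeasurable
        (integrable_condExp.aestronglyMeasurable.const_mul _)) ?_
    filter_upwards [exp_mul_condExp_le_condExp_exp_mul hm _ hf (hexp _)] with ω hω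
    rwa [Real.norm_of_nonneg (Real.exp_nonneg _)]
  refine ((hexp (2 * l)).add hcond).div_const 2 |>.mono'
    (Real.continuous_exp.comp_aestronglyMeasurable
      ((hf.sub integrable_condExp).aestronglyMeasurable.const_mul _)) ?_
  refine ae_of_all _ fun ω => ?_
  have hsq : ∀ a : ℝ, Real.exp (2 * a) = Real.exp a ^ 2 := fun a => by
    rw [sq, ← Real.exp_add, two_mul]
  have hf_sq : Real.exp (2 * l * f ω) = Real.exp (l * f ω) ^ 2 := by rw [mul_assoc, hsq]
  have hcond_sq : Real.exp (-(2 * l) * μ[f|m] ω) = Real.exp (-(l * μ[f|m] ω)) ^ 2 := by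
    rw [← hsq]; ring_nf
  have hsplit : Real.exp (l * (f ω - μ[f|m] ω))
      = Real.exp (l * f ω) * Real.exp (-(l * μ[f|m] ω)) := by
    rw [← Real.exp_add]; ring_nf
  rw [Real.norm_of_nonneg (Real.exp_nonneg _), hsplit, Pi.add_apply, hf_sq, hcond_sq]
  linarith [two_mul_le_add_sq (Real.exp (l * f ω)) (Real.exp (-(l * μ[f|m] ω)))]

end ConditionalExpectation

section ExponentialMartingale

variable {Ω : Type*} {m0 : MeasurableSpace Ω} {μ : Measure Ω} {ℱ : Filtration ℕ m0}
  {X : ℕ → Ω → ℝ}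

noncomputable def exponentialMartingale (ℱ : Filtration ℕ m0) (μ : Measure Ω)
    (X : ℕ → Ω → ℝ) (n : ℕ) (ω : Ω) : ℝ :=
  Real.exp (∑ i ∈ Icc 1 n, (X i ω - Real.log (μ[fun ω' => Real.exp (X i ω')|ℱ (i - 1)] ω)))

theorem exponentialMartingale_zero : exponentialMartingale ℱ μ X 0 = 1 := by
  ext ω; simp [exponentialMartingale]

theorem exponentialMartingale_succ (n : ℕ) :
    exponentialMartingale ℱ μ X (n + 1) =
      (fun ω => exponentialMartingale ℱ μ X n ω *
        Real.exp (-Real.log (μ[fun ω' => Real.exp (X (n + 1) ω')|ℱ n] ω))) *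
      fun ω => Real.exp (X (n + 1) ω) := by
  ext ω
  simp only [exponentialMartingale, Pi.mul_apply, sum_Icc_succ_top (Nat.le_add_left 1 n),
    Nat.add_sub_cancel, ← Real.exp_add]
  ring_nf

theorem stronglyAdapted_exponentialMartingale (hX : ∀ n, 1 ≤ n → Measurable[ℱ n] (X n)) :
    StronglyAdapted ℱ (exponentialMartingale ℱ μ X) := fun n =>
  (Real.measurable_exp.comp (Finset.measurable_sum _ fun i hi => by
    obtain ⟨hi1, hin⟩ := mem_Icc.mp hi
    exact ((hX i hi1).mono (ℱ.mono hin) le_rfl).sub <| Real.measurable_log.comp <|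
      stronglyMeasurable_condExp.measurable.mono (ℱ.mono (i.sub_le 1 |>.trans hin)) le_rfl)
  ).stronglyMeasurable

theorem martingale_exponentialMartingale [IsFiniteMeasure μ]
    (hX : ∀ n, 1 ≤ n → Measurable[ℱ n] (X n)) (hX_int : ∀ n, Integrable (X n) μ)
    (hX_exp : ∀ n, Integrable (fun ω => Real.exp (X n ω)) μ) :
    Martingale (exponentialMartingale ℱ μ X) ℱ μ := by
  set M := exponentialMartingale ℱ μ X
  set C : ℕ → Ω → ℝ := fun n => μ[fun ω => Real.exp (X (n + 1) ω)|ℱ n]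
  set g : ℕ → Ω → ℝ := fun n ω => M n ω * Real.exp (-Real.log (C n ω))
  have hadapted : StronglyAdapted ℱ M := stronglyAdapted_exponentialMartingale hX
  have hg_meas : ∀ n, StronglyMeasurable[ℱ n] (g n) := fun n =>
    ((hadapted n).measurable.mul (Real.measurable_exp.comp
      (Real.measurable_log.comp stronglyMeasurable_condExp.measurable).neg)).stronglyMeasurable
  have hg_nonneg : ∀ n, 0 ≤ g n := fun n ω =>
    mul_nonneg (Real.exp_nonneg _) (Real.exp_nonneg _)
  -- Jensen makes the conditional moment generating function positive, so `log` inverts `exp`.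
  have hgC : ∀ n, g n * C n =ᵐ[μ] M n := fun n => by
    filter_upwards [exp_condExp_le_condExp_exp (ℱ.le n) (hX_int (n + 1)) (hX_exp (n + 1))]
      with ω hω
    have hC : 0 < C n ω := (Real.exp_pos _).trans_le hω
    simp only [g, Pi.mul_apply, Real.exp_neg, Real.exp_log hC, mul_assoc, inv_mul_cancel₀ hC.ne',
      mul_one]
  have hsucc : ∀ n, M (n + 1) = g n * fun ω => Real.exp (X (n + 1) ω) :=
    exponentialMartingale_succ
  have hint : ∀ n, Integrable (M n) μ := fun n => by
    induction n with
    | zero => simp only [M, exponentialMartingale_zero]; exact integrable_const 1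
    | succ n ih =>
      rw [hsucc]
      exact integrable_mul_of_integrable_mul_condExp (ℱ.le n) (hg_meas n) (hg_nonneg n)
        (hX_exp (n + 1)) (ae_of_all _ fun ω => Real.exp_nonneg _) (ih.congr (hgC n).symm)
  refine martingale_nat hadapted hint fun n => ?_
  rw [hsucc]
  exact ((condExp_mul_of_stronglyMeasurable_left (hg_meas n) (hsucc n ▸ hint (n + 1))
    (hX_exp (n + 1))).trans (hgC n)).symm

end ExponentialMartingale

namespace MeasureTheory.Martingale

variable {Ω : Type*} {m0 : MeasurableSpace Ω} {μ : Measure Ω} {ℱ : Filtration ℕ m0}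
  {f : ℕ → Ω → ℝ}

theorem ville_ineq [IsFiniteMeasure μ] (hf : Martingale f ℱ μ) (hf0 : 0 ≤ f) (ε : ℝ≥0) :
    ε * μ {ω | ∃ n, (ε : ℝ) ≤ f n ω} ≤ ENNReal.ofReal (∫ ω, f 0 ω ∂μ) := by
  set A : ℕ → Set Ω := fun N =>
    {ω | (ε : ℝ) ≤ (range (N + 1)).sup' nonempty_range_add_one fun k => f k ω}
  have hA_mono : Monotone A := fun N N' hN ω (hω : (ε : ℝ) ≤ _) =>
    hω.trans (sup'_mono _ (range_subset_range.mpr (Nat.succ_le_succ hN)) _)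
  have hA_union : {ω | ∃ n, (ε : ℝ) ≤ f n ω} = ⋃ N, A N := by
    ext ω
    simp only [A, Set.mem_ofPred_eq, Set.mem_iUnion, le_sup'_iff, mem_range]
    exact ⟨fun ⟨n, hn⟩ => ⟨n, n, by omega, hn⟩, fun ⟨_, k, _, hk⟩ => ⟨k, hk⟩⟩
  rw [hA_union, hA_mono.measure_iUnion, ENNReal.mul_iSup]
  refine iSup_le fun N => (maximal_ineq hf.submartingale hf0 N).trans ?_
  have hint_eq : ∫ ω, f 0 ω ∂μ = ∫ ω, f N ω ∂μ := by
    simpa using hf.setIntegral_eq (Nat.zero_le N) MeasurableSet.univ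
  rw [hint_eq]
  exact ENNReal.ofReal_le_ofReal
    (setIntegral_le_integral (hf.integrable N) (ae_of_all _ (hf0 N)))

theorem ofReal_one_sub_le_measure_forall_lt [IsProbabilityMeasure μ] (hf : Martingale f ℱ μ)
    (hf0 : 0 ≤ f) {c : ℝ} (hc : 0 < c) :
    ENNReal.ofReal (1 - (∫ ω, f 0 ω ∂μ) / c) ≤ μ {ω | ∀ n, f n ω < c} := by
  set S := {ω | ∃ n, c ≤ f n ω}
  have hS : μ S ≤ ENNReal.ofReal ((∫ ω, f 0 ω ∂μ) / c) := by
    have hville := hf.ville_ineq hf0 c.toNNReal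
    rw [Real.coe_toNNReal _ hc.le] at hville
    rw [ENNReal.ofReal_div_of_pos hc, ENNReal.le_div_iff_mul_le (by simp [hc]) (by simp)]
    rwa [mul_comm]
  have hcompl : {ω | ∀ n, f n ω < c} = Sᶜ := by ext ω; simp [S]
  calc ENNReal.ofReal (1 - (∫ ω, f 0 ω ∂μ) / c)
      = 1 - ENNReal.ofReal ((∫ ω, f 0 ω ∂μ) / c) := by
        rw [ENNReal.ofReal_sub _ (div_nonneg (integral_nonneg (hf0 0)) hc.le), ENNReal.ofReal_one]
    _ ≤ 1 - μ S := tsub_le_tsub_left hS 1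
    _ ≤ μ {ω | ∀ n, f n ω < c} := by
        rw [tsub_le_iff_right, hcompl, ← measure_univ (μ := μ), ← Set.compl_union_self S]
        exact measure_union_le Sᶜ S

end MeasureTheory.Martingale

theorem martingale_exponential_inequality_general
    {Ω : Type*} {m0 : MeasurableSpace Ω} {μ : Measure Ω} [IsProbabilityMeasure μ]
    (ℱ : Filtration ℕ m0)
    (Z : ℕ → Ω → ℝ)
    (hZmeas : ∀ n, 1 ≤ n → Measurable[ℱ n] (Z n))
    (hZexp : ∀ (l : ℝ) (n : ℕ), Integrable (fun ω => Real.exp (l * Z n ω)) μ)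
    -- conditional means  μ_n = E[Z_n | H_{n−1}]
    (μZ : ℕ → Ω → ℝ) (hμZ : ∀ n, μZ n = μ[Z n | ℱ (n - 1)])
    -- conditional cumulant generating functions  ψ_n(λ) = log E[exp(λ(Z_n − μ_n)) | H_{n−1}]
    (ψ : ℕ → ℝ → Ω → ℝ)
    (hψ : ∀ n (l : ℝ), ψ n l = fun ω =>
      Real.log ((μ[fun ω' => Real.exp (l * (Z n ω' - μZ n ω')) | ℱ (n - 1)]) ω))
    (x l : ℝ) :
    ENNReal.ofReal (1 - Real.exp (-x)) ≤
      μ {ω | ∀ n : ℕ,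
        ∑ i ∈ Finset.Icc 1 n, l * Z i ω ≤
          x + ∑ i ∈ Finset.Icc 1 n, (l * μZ i ω + ψ i l ω)} := by
  set X : ℕ → Ω → ℝ := fun i ω => l * (Z i ω - μZ i ω)
  have hZ_int : ∀ n, Integrable (Z n) μ := fun n =>
    ProbabilityTheory.integrable_of_mem_interior_integrableExpSet
      (by simp [ProbabilityTheory.integrableExpSet, hZexp])
  have hM : Martingale (exponentialMartingale ℱ μ X) ℱ μ := martingale_exponentialMartingale
    (fun n hn => ((hZmeas n hn).sub ((hμZ n ▸ stronglyMeasurable_condExp.measurable).mono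
      (ℱ.mono (n.sub_le 1)) le_rfl)).const_mul l)
    (fun n => ((hZ_int n).sub (hμZ n ▸ integrable_condExp)).const_mul l)
    (fun n => by simpa only [X, hμZ] using integrable_exp_mul_sub_condExp (ℱ.le _) (hZexp · n) l)
  have hM_eq : ∀ n ω, exponentialMartingale ℱ μ X n ω =
      Real.exp (∑ i ∈ Icc 1 n, l * Z i ω - ∑ i ∈ Icc 1 n, (l * μZ i ω + ψ i l ω)) :=
    fun n ω => by
      simp only [exponentialMartingale, hψ, X, ← sum_sub_distrib]
      exact congrArg Real.exp (sum_congr rfl fun i _ => by ring)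
  calc ENNReal.ofReal (1 - Real.exp (-x))
      = ENNReal.ofReal (1 - (∫ ω, exponentialMartingale ℱ μ X 0 ω ∂μ) / Real.exp x) := by
        simp [exponentialMartingale_zero, Real.exp_neg]
    _ ≤ μ {ω | ∀ n, exponentialMartingale ℱ μ X n ω < Real.exp x} :=
        hM.ofReal_one_sub_le_measure_forall_lt (fun _ _ => Real.exp_nonneg _) (Real.exp_pos x)
    _ ≤ _ := measure_mono fun ω hω => by
        intro n
        have hn := hω n
        rw [hM_eq, Real.exp_lt_exp] at hn
        linarith

/-- Lemma 2 of the paper (martingale exponential inequality): for all `x ≥ 0` and `λ ≥ 0`,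
with probability at least `1 − e^{−x}`, simultaneously for all `n ∈ ℕ`,
`Σ_{i=1}^n λ Z_i ≤ x + Σ_{i=1}^n ( λ μ_i + ψ_i(λ) )`, where `μ_i = E[Z_i | H_{i−1}]` and
`ψ_i(λ) = log E[exp(λ(Z_i − μ_i)) | H_{i−1}]`. -/
theorem martingale_exponential_inequality
    {Ω : Type*} {m0 : MeasurableSpace Ω} {μ : Measure Ω} [IsProbabilityMeasure μ]
    (ℱ : Filtration ℕ m0) (hℱ0 : ℱ 0 = ⊥)
    (Z : ℕ → Ω → ℝ)
    (hZmeas : ∀ n, 1 ≤ n → Measurable[ℱ n] (Z n))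
    (hZexp : ∀ (l : ℝ) (n : ℕ), Integrable (fun ω => Real.exp (l * Z n ω)) μ)
    -- conditional means  μ_n = E[Z_n | H_{n−1}]
    (μZ : ℕ → Ω → ℝ) (hμZ : ∀ n, μZ n = μ[Z n | ℱ (n - 1)])
    -- conditional cumulant generating functions  ψ_n(λ) = log E[exp(λ(Z_n − μ_n)) | H_{n−1}]
    (ψ : ℕ → ℝ → Ω → ℝ)
    (hψ : ∀ n (l : ℝ), ψ n l = fun ω =>
      Real.log ((μ[fun ω' => Real.exp (l * (Z n ω' - μZ n ω')) | ℱ (n - 1)]) ω))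
    (x l : ℝ) (hx : 0 ≤ x) (hl : 0 ≤ l) :
    ENNReal.ofReal (1 - Real.exp (-x)) ≤
      μ {ω | ∀ n : ℕ,
        ∑ i ∈ Finset.Icc 1 n, l * Z i ω ≤
          x + ∑ i ∈ Finset.Icc 1 n, (l * μZ i ω + ψ i l ω)} :=
  martingale_exponential_inequality_general ℱ Z hZmeas hZexp μZ hμZ ψ hψ x l
end

section
/- For any δ > 0, α > 0 and any two vectors θ, θ^α ∈ [0,B]^d with ‖θ − θ^α‖₂ ≤ α, with probability at least 1 − δ it holds simultaneously for all t ∈ ℕ that | (1/2)‖θ* − θ^α‖²_{2,Ẽ_t} − (1/2)‖θ* − θ‖²_{2,Ẽ_t} + L_{2,t}(θ) − L_{2,t}(θ^α) | ≤ α t d ( 8B + √(8η² log(4dt²/δ)) ). -/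
open MeasureTheory Finset

/-- Cumulative squared prediction error `L_{2,t}(θ) = Σ_{τ=1}^{t−1} Σ_{i∈A_τ} (θ_i − R_{τ,i})²`. -/
noncomputable def predError {Ω : Type*} {d : ℕ} (A : ℕ → Ω → Finset (Fin d))
    (R : ℕ → Fin d → Ω → ℝ) (t : ℕ) (θ : Fin d → ℝ) (ω : Ω) : ℝ :=
  ∑ τ ∈ Finset.Ico 1 t, ∑ i ∈ A τ ω, (θ i - R τ i ω) ^ 2

/-- `n_{t,i} = #{τ < t : i ∈ A_τ}`, the number of pulls of arm `i` before round `t`. -/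
def nPulls {Ω : Type*} {d : ℕ} (A : ℕ → Ω → Finset (Fin d)) (t : ℕ) (i : Fin d) (ω : Ω) : ℕ :=
  ((Finset.Ico 1 t).filter fun τ => i ∈ A τ ω).card

/-- Squared empirical 2-norm `‖Δ‖²_{2,Ẽ_t} = Σ_{i=1}^d n_{t,i} Δ_i²`. -/
noncomputable def empNormSq {Ω : Type*} {d : ℕ} (A : ℕ → Ω → Finset (Fin d)) (t : ℕ)
    (Δ : Fin d → ℝ) (ω : Ω) : ℝ :=
  ∑ i : Fin d, (nPulls A t i ω : ℝ) * Δ i ^ 2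

/-!
On the event that every noise `ε_{s,i} = R_{s,i} − θ*_i` (`s ≥ 1`) is bounded in absolute value
by `r_s = √(2η² log(4ds²/δ))`, each summand of the discretization error factors as
`(θ_i − θ^α_i) ((θ_i + θ^α_i − 2θ*_i)/2 − 2ε_{τ,i})`, so it is at most `α (B + 2 r_t)` in absolute
value, and there are at most `t d` summands. The Chernoff bound for the sub-Gaussian noise gives
`P(|ε_{s,i}| > r_s) ≤ δ / (2 d s²)`, and a union bound over arms and rounds, using
`∑ 1/s² = π²/6 ≤ 2`, shows that this event has probability at least `1 − δ`.
-/

open ProbabilityTheory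

lemma hasSubgaussianMGF_of_ae_condExp_exp_le {Ω : Type*} {m m0 : MeasurableSpace Ω}
    {μ : Measure Ω} [IsProbabilityMeasure μ] (hm : m ≤ m0) {X : Ω → ℝ} {η : ℝ}
    (hint : ∀ l : ℝ, Integrable (fun ω => Real.exp (l * X ω)) μ)
    (hcond : ∀ l : ℝ, ∀ᵐ ω ∂μ,
      (μ[fun ω' => Real.exp (l * X ω') | m]) ω ≤ Real.exp (l ^ 2 * η ^ 2 / 2)) :
    HasSubgaussianMGF X (η ^ 2).toNNReal μ where
  integrable_exp_mul := hint
  mgf_le l := by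
    calc mgf X μ l = ∫ ω, (μ[fun ω' => Real.exp (l * X ω') | m]) ω ∂μ :=
          (integral_condExp hm).symm
      _ ≤ ∫ _, Real.exp (l ^ 2 * η ^ 2 / 2) ∂μ :=
          integral_mono_ae integrable_condExp (integrable_const _) (hcond l)
      _ = Real.exp ((η ^ 2).toNNReal * l ^ 2 / 2) := by
          rw [Real.coe_toNNReal _ (sq_nonneg η), integral_const, probReal_univ, one_smul,
            mul_comm (l ^ 2)]

lemma ProbabilityTheory.HasSubgaussianMGF.measure_lt_abs_le {Ω : Type*} {m0 : MeasurableSpace Ω}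
    {μ : Measure Ω} [IsFiniteMeasure μ] {X : Ω → ℝ} {c : NNReal}
    (h : HasSubgaussianMGF X c μ) {ε : ℝ} (hε : 0 ≤ ε) :
    μ {ω | ε < |X ω|} ≤ ENNReal.ofReal (2 * Real.exp (-ε ^ 2 / (2 * c))) := by
  have htail : ∀ Y : Ω → ℝ, HasSubgaussianMGF Y c μ →
      μ {ω | ε ≤ Y ω} ≤ ENNReal.ofReal (Real.exp (-ε ^ 2 / (2 * c))) := fun Y hY =>
    (ENNReal.le_ofReal_iff_toReal_le (measure_ne_top _ _) (Real.exp_pos _).le).2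
      (hY.measure_ge_le hε)
  have hsplit : {ω | ε < |X ω|} ⊆ {ω | ε ≤ X ω} ∪ {ω | ε ≤ (-X) ω} := fun ω hω => by
    rcases le_abs'.1 (le_of_lt (show ε < |X ω| from hω)) with hneg | hpos
    · exact Or.inr (show ε ≤ -X ω by linarith)
    · exact Or.inl hpos
  calc μ {ω | ε < |X ω|} ≤ μ {ω | ε ≤ X ω} + μ {ω | ε ≤ (-X) ω} :=
        (measure_mono hsplit).trans (measure_union_le _ _)
    _ ≤ _ := by
        rw [two_mul, ENNReal.ofReal_add (Real.exp_pos _).le (Real.exp_pos _).le]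
        exact add_le_add (htail X h) (htail (-X) h.neg)

/-- Confidence radius at round `t`: `√(2η² log(4dt²/δ))`. -/
noncomputable def noiseRadius (η δ : ℝ) (d t : ℕ) : ℝ :=
  Real.sqrt (2 * η ^ 2 * Real.log (4 * d * t ^ 2 / δ))

lemma noiseRadius_nonneg (η δ : ℝ) (d t : ℕ) : 0 ≤ noiseRadius η δ d t :=
  Real.sqrt_nonneg _

lemma two_mul_exp_neg_noiseRadius_sq {η δ : ℝ} {d t : ℕ} (hη : η ≠ 0) (hδ : 0 < δ)
    (h : 1 ≤ 4 * d * t ^ 2 / δ) :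
    2 * Real.exp (-noiseRadius η δ d t ^ 2 / (2 * η ^ 2)) = δ / (2 * d * t ^ 2) := by
  have hlog : 0 ≤ Real.log (4 * d * t ^ 2 / δ) := Real.log_nonneg h
  have hdt : (d : ℝ) * t ^ 2 ≠ 0 := by
    rintro hzero
    rw [mul_assoc, hzero] at h
    norm_num at h
  rw [noiseRadius, Real.sq_sqrt (by positivity),
    show -(2 * η ^ 2 * Real.log (4 * d * t ^ 2 / δ)) / (2 * η ^ 2)
      = -Real.log (4 * d * t ^ 2 / δ) by field_simp,
    Real.exp_neg, Real.exp_log (by linarith)]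
  field_simp
  norm_num

lemma noiseRadius_le_noiseRadius {η δ : ℝ} {d τ t : ℕ} (hδ : 0 < δ) (hd : 0 < d) (hτ : 1 ≤ τ)
    (hτt : τ ≤ t) : noiseRadius η δ d τ ≤ noiseRadius η δ d t := by
  unfold noiseRadius
  gcongr

lemma sqrt_eight_mul_eq_two_mul_noiseRadius (η δ : ℝ) (d t : ℕ) :
    Real.sqrt (8 * η ^ 2 * Real.log (4 * d * t ^ 2 / δ)) = 2 * noiseRadius η δ d t := by
  rw [noiseRadius, show (8 : ℝ) * η ^ 2 * Real.log (4 * d * t ^ 2 / δ)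
      = 2 ^ 2 * (2 * η ^ 2 * Real.log (4 * d * t ^ 2 / δ)) by ring,
    Real.sqrt_mul (by norm_num), Real.sqrt_sq (by norm_num)]

lemma hasSum_one_div_succ_sq :
    HasSum (fun s : ℕ => (1 : ℝ) / ((s : ℝ) + 1) ^ 2) (Real.pi ^ 2 / 6) := by
  have h := hasSum_zeta_two
  rw [← hasSum_nat_add_iff' 1] at h
  simpa using h

lemma measure_noiseRadius_lt_abs_le {Ω : Type*} {m0 : MeasurableSpace Ω} {μ : Measure Ω}
    [IsFiniteMeasure μ] {X : Ω → ℝ} {η δ : ℝ} {d t : ℕ}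
    (hX : HasSubgaussianMGF X (η ^ 2).toNNReal μ) (hη : η ≠ 0) (hδ : 0 < δ) (hδ1 : δ ≤ 1)
    (hd : 1 ≤ d) (ht : 1 ≤ t) :
    μ {ω | noiseRadius η δ d t < |X ω|} ≤ ENNReal.ofReal (δ / (2 * d * t ^ 2)) := by
  have hd' : (1 : ℝ) ≤ d := by exact_mod_cast hd
  have ht' : (1 : ℝ) ≤ t := by exact_mod_cast ht
  have harg : 1 ≤ 4 * d * t ^ 2 / δ := by
    rw [le_div_iff₀ hδ]
    nlinarith
  refine (hX.measure_lt_abs_le (noiseRadius_nonneg η δ d t)).trans_eq ?_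
  rw [Real.coe_toNNReal _ (sq_nonneg η), two_mul_exp_neg_noiseRadius_sq hη hδ harg]

lemma measure_exists_noiseRadius_lt_abs_le {Ω : Type*} {m0 : MeasurableSpace Ω}
    {μ : Measure Ω} [IsFiniteMeasure μ] {d : ℕ} {η δ : ℝ} (hη : η ≠ 0) (hδ : 0 < δ)
    (hδ1 : δ ≤ 1) (ε : ℕ → Fin d → Ω → ℝ)
    (hε : ∀ t, 1 ≤ t → ∀ i, HasSubgaussianMGF (ε t i) (η ^ 2).toNNReal μ) :
    μ {ω | ∃ t, 1 ≤ t ∧ ∃ i, noiseRadius η δ d t < |ε t i ω|} ≤ ENNReal.ofReal δ := by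
  have hround : ∀ s : ℕ, μ (⋃ i, {ω | noiseRadius η δ d (s + 1) < |ε (s + 1) i ω|})
      ≤ ENNReal.ofReal (δ / 2 * (1 / ((s : ℝ) + 1) ^ 2)) := fun s => by
    calc μ (⋃ i, {ω | noiseRadius η δ d (s + 1) < |ε (s + 1) i ω|})
        ≤ ∑ i : Fin d, ENNReal.ofReal (δ / (2 * d * ((s + 1 : ℕ) : ℝ) ^ 2)) :=
          (measure_iUnion_fintype_le μ _).trans (sum_le_sum fun i _ =>
            measure_noiseRadius_lt_abs_le (hε (s + 1) s.succ_pos i) hη hδ hδ1 i.pos s.succ_pos)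
      _ = ENNReal.ofReal (d * (δ / (2 * d * ((s : ℝ) + 1) ^ 2))) := by
          rw [← ENNReal.ofReal_sum_of_nonneg fun i _ => by positivity, sum_const, card_univ,
            Fintype.card_fin, nsmul_eq_mul, Nat.cast_succ]
      _ ≤ _ := by
          refine ENNReal.ofReal_le_ofReal ?_
          rcases (Nat.cast_nonneg d : (0 : ℝ) ≤ d).eq_or_lt with hd | hd
          · rw [← hd, zero_mul]
            positivity
          · exact le_of_eq (by field_simp)
  have hsum := hasSum_one_div_succ_sq.mul_left (δ / 2)
  calc μ {ω | ∃ t, 1 ≤ t ∧ ∃ i, noiseRadius η δ d t < |ε t i ω|}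
      ≤ μ (⋃ s : ℕ, ⋃ i, {ω | noiseRadius η δ d (s + 1) < |ε (s + 1) i ω|}) := by
        refine measure_mono fun ω ⟨t, ht, i, hi⟩ => ?_
        obtain ⟨s, rfl⟩ := Nat.exists_eq_add_of_le' ht
        exact Set.mem_iUnion₂.2 ⟨s, i, hi⟩
    _ ≤ ∑' s : ℕ, ENNReal.ofReal (δ / 2 * (1 / ((s : ℝ) + 1) ^ 2)) :=
        (measure_iUnion_le _).trans (ENNReal.tsum_le_tsum hround)
    _ = ENNReal.ofReal (δ / 2 * (Real.pi ^ 2 / 6)) := by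
        rw [← ENNReal.ofReal_tsum_of_nonneg (fun s => by positivity) hsum.summable, hsum.tsum_eq]
    _ ≤ ENNReal.ofReal δ := by
        have hpi : Real.pi ^ 2 / 6 ≤ 2 := by nlinarith [Real.pi_lt_d2, Real.pi_pos]
        exact ENNReal.ofReal_le_ofReal (by nlinarith)

lemma ofReal_one_sub_le_measure_compl {Ω : Type*} {m0 : MeasurableSpace Ω} {μ : Measure Ω}
    [IsProbabilityMeasure μ] {s : Set Ω} {δ : ℝ} (hδ : 0 ≤ δ) (hs : μ s ≤ ENNReal.ofReal δ) :
    ENNReal.ofReal (1 - δ) ≤ μ sᶜ := by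
  calc ENNReal.ofReal (1 - δ) = 1 - ENNReal.ofReal δ := by
        rw [ENNReal.ofReal_sub _ hδ, ENNReal.ofReal_one]
    _ ≤ 1 - μ s := tsub_le_tsub_left hs 1
    _ ≤ μ sᶜ := by
        rw [tsub_le_iff_left, ← measure_univ (μ := μ)]
        exact measure_univ_le_add_compl s

lemma empNormSq_eq_sum_sum {Ω : Type*} {d : ℕ} (A : ℕ → Ω → Finset (Fin d)) (t : ℕ)
    (Δ : Fin d → ℝ) (ω : Ω) :
    empNormSq A t Δ ω = ∑ τ ∈ Ico 1 t, ∑ i ∈ A τ ω, Δ i ^ 2 := by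
  classical
  calc empNormSq A t Δ ω = ∑ i, ∑ τ ∈ Ico 1 t, if i ∈ A τ ω then Δ i ^ 2 else 0 := by
        refine sum_congr rfl fun i _ => ?_
        rw [← sum_filter, sum_const, nsmul_eq_mul]
        rfl
    _ = ∑ τ ∈ Ico 1 t, ∑ i ∈ A τ ω, Δ i ^ 2 := by
        rw [sum_comm]
        simp_rw [sum_ite_mem, univ_inter]

lemma abs_sum_Ico_sum_le {d : ℕ} (s : ℕ → Finset (Fin d)) (g : ℕ → Fin d → ℝ) {t : ℕ} {M : ℝ}
    (hM : 0 ≤ M) (hg : ∀ τ ∈ Ico 1 t, ∀ i ∈ s τ, |g τ i| ≤ M) :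
    |∑ τ ∈ Ico 1 t, ∑ i ∈ s τ, g τ i| ≤ t * d * M := by
  have hround : ∀ τ ∈ Ico 1 t, |∑ i ∈ s τ, g τ i| ≤ d * M := fun τ hτ => by
    calc |∑ i ∈ s τ, g τ i| ≤ ∑ i ∈ s τ, |g τ i| := abs_sum_le_sum_abs _ _
      _ ≤ (s τ).card * M := by simpa using sum_le_card_nsmul _ _ _ (hg τ hτ)
      _ ≤ d * M := by
          gcongr
          simpa using card_le_univ (s τ)
  calc |∑ τ ∈ Ico 1 t, ∑ i ∈ s τ, g τ i| ≤ ∑ τ ∈ Ico 1 t, |∑ i ∈ s τ, g τ i| :=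
        abs_sum_le_sum_abs _ _
    _ ≤ (t - 1 : ℕ) * (d * M) := by simpa using sum_le_card_nsmul _ _ _ hround
    _ ≤ t * d * M := by
        rw [← mul_assoc]
        gcongr
        exact_mod_cast Nat.sub_le t 1

lemma abs_discretization_term_le {a b c r B α x : ℝ} (ha : a ∈ Set.Icc 0 B)
    (hb : b ∈ Set.Icc 0 B) (hc : c ∈ Set.Icc 0 B) (hab : |a - b| ≤ α) (hr : |r - c| ≤ x) :
    |1 / 2 * (c - b) ^ 2 - 1 / 2 * (c - a) ^ 2 + (a - r) ^ 2 - (b - r) ^ 2| ≤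
      α * (B + 2 * x) := by
  have hmid : |(a + b - 2 * c) / 2 - 2 * (r - c)| ≤ B + 2 * x := by
    obtain ⟨ha0, haB⟩ := ha
    obtain ⟨hb0, hbB⟩ := hb
    obtain ⟨hc0, hcB⟩ := hc
    obtain ⟨hr1, hr2⟩ := abs_le.1 hr
    rw [abs_le]
    constructor <;> linarith
  calc |1 / 2 * (c - b) ^ 2 - 1 / 2 * (c - a) ^ 2 + (a - r) ^ 2 - (b - r) ^ 2|
      = |a - b| * |(a + b - 2 * c) / 2 - 2 * (r - c)| := by
        rw [← abs_mul]
        ring_nf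
    _ ≤ α * (B + 2 * x) := mul_le_mul hab hmid (abs_nonneg _) ((abs_nonneg _).trans hab)

lemma abs_discretization_error_le {Ω : Type*} {d : ℕ} (A : ℕ → Ω → Finset (Fin d))
    (R : ℕ → Fin d → Ω → ℝ) (t : ℕ) (ω : Ω) {θstar θ θα : Fin d → ℝ} {B α x : ℝ}
    (hB : 0 ≤ B) (hθstar : ∀ i, θstar i ∈ Set.Icc 0 B) (hθ : ∀ i, θ i ∈ Set.Icc 0 B)
    (hθα : ∀ i, θα i ∈ Set.Icc 0 B) (hclose : Real.sqrt (∑ i, (θ i - θα i) ^ 2) ≤ α)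
    (hx : 0 ≤ x) (hnoise : ∀ τ ∈ Ico 1 t, ∀ i ∈ A τ ω, |R τ i ω - θstar i| ≤ x) :
    |(1 / 2) * empNormSq A t (θstar - θα) ω - (1 / 2) * empNormSq A t (θstar - θ) ω
        + predError A R t θ ω - predError A R t θα ω| ≤ α * t * d * (B + 2 * x) := by
  have hcoord : ∀ i, |θ i - θα i| ≤ α := fun i =>
    (Real.abs_le_sqrt (single_le_sum (f := fun j => (θ j - θα j) ^ 2)
      (fun j _ => sq_nonneg _) (mem_univ i))).trans hclose
  have hα : 0 ≤ α := (Real.sqrt_nonneg _).trans hclose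
  simp only [empNormSq_eq_sum_sum, predError, mul_sum, ← sum_sub_distrib, ← sum_add_distrib,
    Pi.sub_apply]
  refine (abs_sum_Ico_sum_le _ _ (by positivity) fun τ hτ i hi =>
    abs_discretization_term_le (hθ i) (hθα i) (hθstar i) (hcoord i) (hnoise τ hτ i hi)).trans_eq ?_
  ring

theorem discretization_error_bound_general
    {Ω : Type*} {m0 : MeasurableSpace Ω} {μ : Measure Ω} [IsProbabilityMeasure μ]
    (d : ℕ) (B η : ℝ) (hB : 0 < B) (hη : 0 < η)
    (θstar : Fin d → ℝ) (hθstar : ∀ i, θstar i ∈ Set.Icc (0 : ℝ) B)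
    (ℱ : Filtration ℕ m0)
    (A : ℕ → Ω → Finset (Fin d))
    (R : ℕ → Fin d → Ω → ℝ)
    (hint : ∀ (l : ℝ) t, 1 ≤ t → ∀ i,
      Integrable (fun ω => Real.exp (l * (R t i ω - θstar i))) μ)
    -- the noise `ε_{t,i} = R_{t,i} − θ*_i` is conditionally `η`-sub-Gaussian
    (hsubG : ∀ (l : ℝ) t, 1 ≤ t → ∀ i,
      ∀ᵐ ω ∂μ, (μ[fun ω' => Real.exp (l * (R t i ω' - θstar i)) | ℱ (t - 1)]) ω ≤
        Real.exp (l ^ 2 * η ^ 2 / 2))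
    (δ α : ℝ) (hδ : 0 < δ)
    (θ θα : Fin d → ℝ)
    (hθ : ∀ i, θ i ∈ Set.Icc (0 : ℝ) B) (hθα : ∀ i, θα i ∈ Set.Icc (0 : ℝ) B)
    (hclose : Real.sqrt (∑ i, (θ i - θα i) ^ 2) ≤ α) :
    ENNReal.ofReal (1 - δ) ≤
      μ {ω | ∀ t : ℕ, 1 ≤ t →
        |(1 / 2) * empNormSq A t (θstar - θα) ω - (1 / 2) * empNormSq A t (θstar - θ) ω
            + predError A R t θ ω - predError A R t θα ω| ≤
          α * t * d * (8 * B + Real.sqrt (8 * η ^ 2 * Real.log (4 * d * t ^ 2 / δ)))} := by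
  rcases le_or_gt 1 δ with hδ1 | hδ1
  · rw [ENNReal.ofReal_of_nonpos (by linarith)]
    exact zero_le
  set bad := {ω | ∃ t, 1 ≤ t ∧ ∃ i, noiseRadius η δ d t < |R t i ω - θstar i|}
  have hbad : μ bad ≤ ENNReal.ofReal δ :=
    measure_exists_noiseRadius_lt_abs_le hη.ne' hδ hδ1.le (fun t i ω => R t i ω - θstar i)
      fun t ht i => hasSubgaussianMGF_of_ae_condExp_exp_le (ℱ.le _) (hint · t ht i)
        (hsubG · t ht i)
  refine (ofReal_one_sub_le_measure_compl hδ.le hbad).trans (measure_mono fun ω hω t _ => ?_)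
  simp only [bad, Set.mem_compl_iff, Set.mem_ofPred_eq, not_exists, not_and, not_lt] at hω
  have hα : 0 ≤ α := (Real.sqrt_nonneg _).trans hclose
  rw [sqrt_eight_mul_eq_two_mul_noiseRadius]
  refine (abs_discretization_error_le A R t ω hB.le hθstar hθ hθα hclose
    (noiseRadius_nonneg η δ d t) fun τ hτ i _ => ?_).trans ?_
  · obtain ⟨hτ1, hτt⟩ := mem_Ico.1 hτ
    exact (hω τ hτ1 i).trans (noiseRadius_le_noiseRadius hδ i.pos hτ1 hτt.le)
  · gcongr
    linarith

/-- Lemma 4 of the paper (discretization error): for any `δ, α > 0` and any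
`θ, θ^α ∈ [0,B]^d` with `‖θ − θ^α‖₂ ≤ α`, with probability at least `1 − δ`,
simultaneously for all rounds `t`,
`|½‖θ* − θ^α‖²_{2,Ẽ_t} − ½‖θ* − θ‖²_{2,Ẽ_t} + L_{2,t}(θ) − L_{2,t}(θ^α)|
  ≤ α t d (8B + √(8η² log(4dt²/δ)))`. -/
theorem discretization_error_bound
    {Ω : Type*} {m0 : MeasurableSpace Ω} {μ : Measure Ω} [IsProbabilityMeasure μ]
    (d : ℕ) (B η : ℝ) (hB : 0 < B) (hη : 0 < η)
    (θstar : Fin d → ℝ) (hθstar : ∀ i, θstar i ∈ Set.Icc (0 : ℝ) B)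
    (ℱ : Filtration ℕ m0)
    (A : ℕ → Ω → Finset (Fin d))
    (hA : ∀ t, 1 ≤ t → ∀ i, MeasurableSet[ℱ (t - 1)] {ω | i ∈ A t ω})
    (R : ℕ → Fin d → Ω → ℝ)
    (hR : ∀ t, 1 ≤ t → ∀ i, Measurable[ℱ t] (R t i))
    (hint : ∀ (l : ℝ) t, 1 ≤ t → ∀ i,
      Integrable (fun ω => Real.exp (l * (R t i ω - θstar i))) μ)
    -- the noise `ε_{t,i} = R_{t,i} − θ*_i` is conditionally `η`-sub-Gaussian
    (hsubG : ∀ (l : ℝ) t, 1 ≤ t → ∀ i,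
      ∀ᵐ ω ∂μ, (μ[fun ω' => Real.exp (l * (R t i ω' - θstar i)) | ℱ (t - 1)]) ω ≤
        Real.exp (l ^ 2 * η ^ 2 / 2))
    (δ α : ℝ) (hδ : 0 < δ) (hα : 0 < α)
    (θ θα : Fin d → ℝ)
    (hθ : ∀ i, θ i ∈ Set.Icc (0 : ℝ) B) (hθα : ∀ i, θα i ∈ Set.Icc (0 : ℝ) B)
    (hclose : Real.sqrt (∑ i, (θ i - θα i) ^ 2) ≤ α) :
    ENNReal.ofReal (1 - δ) ≤
      μ {ω | ∀ t : ℕ, 1 ≤ t →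
        |(1 / 2) * empNormSq A t (θstar - θα) ω - (1 / 2) * empNormSq A t (θstar - θ) ω
            + predError A R t θ ω - predError A R t θα ω| ≤
          α * t * d * (8 * B + Real.sqrt (8 * η ^ 2 * Real.log (4 * d * t ^ 2 / δ)))} :=
  discretization_error_bound_general d B η hB hη θstar hθstar ℱ A R hint hsubG δ α hδ θ θα hθ hθα
    hclose
end

section
/- Let W ∈ ℝ^{d×d} be symmetric positive definite, β ≥ 0, θ̂ ∈ ℝ^d, and let C ⊆ { θ ∈ ℝ^d : (θ − θ̂)ᵀ W (θ − θ̂) ≤ β }. Let X ⊆ ℝ^d, θ* ∈ C, x* ∈ X, and suppose (x̃, θ̃) ∈ X × C satisfies ⟨x̃, θ̃⟩ ≥ ⟨x, θ⟩ for all (x, θ) ∈ X × C (i.e., it is an optimistic maximizer). Then the instantaneous regret satisfies ⟨x*, θ*⟩ − ⟨x̃, θ*⟩ ≤ 2 √(x̃ᵀ W⁻¹ x̃) · √β. -/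
/-!
By optimism `⟨x*, θ*⟩ ≤ ⟨x̃, θ̃⟩`, so the regret is at most
`⟨x̃, θ̃ - θ*⟩ = ⟨x̃, θ̃ - θ̂⟩ + ⟨x̃, θ̂ - θ*⟩`. Both `θ̃` and `θ*` lie in the ellipsoid of
`W`-radius `√β` around `θ̂`, and Cauchy–Schwarz for the pairing of the `W⁻¹`- and `W`-norms,
`⟨x, v⟩ ≤ ‖x‖_{W⁻¹} ‖v‖_W`, bounds each term by `√(x̃ᵀ W⁻¹ x̃) √β`.
-/

namespace Matrix

variable {n : Type*} [Fintype n] [DecidableEq n]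

theorem PosSemidef.dotProduct_mulVec_sq_le {M : Matrix n n ℝ} (hM : M.PosSemidef) (u v : n → ℝ) :
    (u ⬝ᵥ M *ᵥ v) ^ 2 ≤ (u ⬝ᵥ M *ᵥ u) * (v ⬝ᵥ M *ᵥ v) := by
  have hsymm : LinearMap.IsSymm M.toBilin' :=
    LinearMap.BilinForm.isSymm_iff.1 (isSymm_toBilin'_iff_isSymm.2 hM.isHermitian.eq)
  have hnonneg (x : n → ℝ) : 0 ≤ M.toBilin' x x := by
    simpa [toBilin'_apply'] using hM.dotProduct_mulVec_nonneg x
  simpa only [toBilin'_apply'] using M.toBilin'.apply_sq_le_of_symm hnonneg hsymm u v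

theorem PosDef.dotProduct_le_sqrt_mul_sqrt {W : Matrix n n ℝ} (hW : W.PosDef) (x v : n → ℝ) :
    x ⬝ᵥ v ≤ √(x ⬝ᵥ W⁻¹ *ᵥ x) * √(v ⬝ᵥ W *ᵥ v) := by
  set u := W⁻¹ *ᵥ x
  have hWu : W *ᵥ u = x := by
    rw [mulVec_mulVec, mul_nonsing_inv _ (isUnit_iff_ne_zero.2 hW.det_pos.ne'), one_mulVec]
  have hWsymm : Wᵀ = W := by simpa using hW.isHermitian.eq
  have hx : ∀ w, u ⬝ᵥ W *ᵥ w = x ⬝ᵥ w := fun w ↦ by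
    rw [dotProduct_mulVec, ← hWsymm, vecMul_transpose, hWu]
  calc x ⬝ᵥ v ≤ |x ⬝ᵥ v| := le_abs_self _
    _ = √((u ⬝ᵥ W *ᵥ v) ^ 2) := by rw [hx, Real.sqrt_sq_eq_abs]
    _ ≤ √((u ⬝ᵥ W *ᵥ u) * (v ⬝ᵥ W *ᵥ v)) :=
      Real.sqrt_le_sqrt (hW.posSemidef.dotProduct_mulVec_sq_le u v)
    _ = √(x ⬝ᵥ W⁻¹ *ᵥ x) * √(v ⬝ᵥ W *ᵥ v) := by
      have hv : 0 ≤ v ⬝ᵥ W *ᵥ v := by simpa using hW.posSemidef.dotProduct_mulVec_nonneg v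
      rw [hx, dotProduct_comm, Real.sqrt_mul' _ hv]

theorem PosDef.dotProduct_sub_le_of_mem_ellipsoid {W : Matrix n n ℝ} (hW : W.PosDef) {β : ℝ}
    {c θ θ' : n → ℝ} (hθ : (θ - c) ⬝ᵥ W *ᵥ (θ - c) ≤ β) (hθ' : (θ' - c) ⬝ᵥ W *ᵥ (θ' - c) ≤ β)
    (x : n → ℝ) :
    x ⬝ᵥ θ - x ⬝ᵥ θ' ≤ 2 * √(x ⬝ᵥ W⁻¹ *ᵥ x) * √β := by
  have hwidth {v : n → ℝ} (hv : v ⬝ᵥ W *ᵥ v ≤ β) : x ⬝ᵥ v ≤ √(x ⬝ᵥ W⁻¹ *ᵥ x) * √β :=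
    (hW.dotProduct_le_sqrt_mul_sqrt x v).trans <|
      mul_le_mul_of_nonneg_left (Real.sqrt_le_sqrt hv) (Real.sqrt_nonneg _)
  have hθ'_neg : (c - θ') ⬝ᵥ W *ᵥ (c - θ') ≤ β := by
    rwa [← neg_sub θ' c, mulVec_neg, neg_dotProduct_neg]
  have hsplit : x ⬝ᵥ θ - x ⬝ᵥ θ' = x ⬝ᵥ (θ - c) + x ⬝ᵥ (c - θ') := by
    simp only [dotProduct_sub]; ring
  linarith [hwidth hθ, hwidth hθ'_neg]

end Matrix

theorem ofu_instantaneous_regret_bound_general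
    {d : ℕ} (W : Matrix (Fin d) (Fin d) ℝ) (hW : W.PosDef)
    (β : ℝ) (θhat : Fin d → ℝ)
    (C : Set (Fin d → ℝ))
    (hC : C ⊆ {θ | (θ - θhat) ⬝ᵥ W.mulVec (θ - θhat) ≤ β})
    (X : Set (Fin d → ℝ))
    (θstar : Fin d → ℝ) (hθstar : θstar ∈ C)
    (xstar : Fin d → ℝ) (hxstar : xstar ∈ X)
    (xt θt : Fin d → ℝ) (hθt : θt ∈ C)
    (hopt : ∀ x ∈ X, ∀ θ ∈ C, x ⬝ᵥ θ ≤ xt ⬝ᵥ θt) :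
    xstar ⬝ᵥ θstar - xt ⬝ᵥ θstar ≤ 2 * Real.sqrt (xt ⬝ᵥ W⁻¹.mulVec xt) * Real.sqrt β := by
  have hoptimism : xstar ⬝ᵥ θstar ≤ xt ⬝ᵥ θt := hopt xstar hxstar θstar hθstar
  have hwidth := hW.dotProduct_sub_le_of_mem_ellipsoid (hC hθt) (hC hθstar) xt
  linarith

/-- Lemma 8 of the paper (OFU regret decomposition): if the confidence set `C` is contained
in the ellipsoid `{θ : (θ − θ̂)ᵀ W (θ − θ̂) ≤ β}`, `θ* ∈ C`, `x* ∈ X`, and `(x̃, θ̃)` is an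
optimistic maximizer of `⟨x, θ⟩` over `X × C`, then the instantaneous regret satisfies
`⟨x*, θ*⟩ − ⟨x̃, θ*⟩ ≤ 2 √(x̃ᵀ W⁻¹ x̃) √β`. -/
theorem ofu_instantaneous_regret_bound
    {d : ℕ} (W : Matrix (Fin d) (Fin d) ℝ) (hW : W.PosDef)
    (β : ℝ) (hβ : 0 ≤ β) (θhat : Fin d → ℝ)
    (C : Set (Fin d → ℝ))
    (hC : C ⊆ {θ | (θ - θhat) ⬝ᵥ W.mulVec (θ - θhat) ≤ β})
    (X : Set (Fin d → ℝ))
    (θstar : Fin d → ℝ) (hθstar : θstar ∈ C)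
    (xstar : Fin d → ℝ) (hxstar : xstar ∈ X)
    (xt θt : Fin d → ℝ) (hxt : xt ∈ X) (hθt : θt ∈ C)
    (hopt : ∀ x ∈ X, ∀ θ ∈ C, x ⬝ᵥ θ ≤ xt ⬝ᵥ θt) :
    xstar ⬝ᵥ θstar - xt ⬝ᵥ θstar ≤ 2 * Real.sqrt (xt ⬝ᵥ W⁻¹.mulVec xt) * Real.sqrt β :=
  ofu_instantaneous_regret_bound_general W hW β θhat C hC X θstar hθstar xstar hxstar xt θt hθt hopt
end

section
/- Under the deterministic OFU setup with horizon T, if θ* ∈ C_t for every t ≤ T, then Σ_{t=1}^T r_t² ≤ 8 β_T d log( 1 + T/γ ). -/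
/-!
Each round's regret is at most the width of the confidence ellipsoid in the played direction:
optimism gives `r_t ≤ ⟨x_t, θ̃_t - θ*⟩`, and since both parameters lie in an `A_t`-ellipsoid of
radius `√β_t`, Cauchy–Schwarz bounds `r_t²` by `4 β_t ‖x_t‖²_{A_t⁻¹}`. As `A_t` is diagonal, the
elliptic potential `Σ_t ‖x_t‖²_{A_t⁻¹}` splits over coordinates; in each coordinate it is a sum
`Σ_t b_t / (γ + b_1 + ⋯ + b_{t-1})` with `b_t ∈ [0, 1]`, and the elementary bound
`y ≤ 2 log (1 + y)` on `[0, 2]` telescopes it to `2 log (1 + T/γ)`.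
-/

open Matrix Finset

/-- The diagonal design matrix `A_t = γ I_d + Σ_{τ=1}^{t−1} diag(x_τ)`. -/
noncomputable def designMatrix {d : ℕ} (x : ℕ → Fin d → ℝ) (γ : ℝ) (t : ℕ) :
    Matrix (Fin d) (Fin d) ℝ :=
  γ • (1 : Matrix (Fin d) (Fin d) ℝ) + ∑ τ ∈ Finset.Ico 1 t, Matrix.diagonal (x τ)

lemma Real.le_two_mul_log_one_add {y : ℝ} (h0 : 0 ≤ y) (h2 : y ≤ 2) :
    y ≤ 2 * Real.log (1 + y) := by
  have hlog := Real.le_log_one_add_of_nonneg h0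
  have : y / 2 ≤ 2 * y / (y + 2) := by
    rw [div_le_div_iff₀ two_pos (by linarith)]
    nlinarith
  linarith

lemma div_le_two_mul_log_add_sub_log {u b : ℝ} (hu : 1 ≤ u) (hb0 : 0 ≤ b) (hb2 : b ≤ 2) :
    b / u ≤ 2 * (Real.log (u + b) - Real.log u) := by
  have hu0 : 0 < u := one_pos.trans_le hu
  rw [← Real.log_div (by positivity) hu0.ne', add_div, div_self hu0.ne']
  refine Real.le_two_mul_log_one_add (div_nonneg hb0 hu0.le) ?_
  exact (div_le_self hb0 hu).trans hb2

lemma sum_div_add_partial_sum_le_two_mul_log_sub {b : ℕ → ℝ} {γ : ℝ} (hγ : 1 ≤ γ) (T : ℕ)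
    (hb : ∀ t ∈ Icc 1 T, 0 ≤ b t ∧ b t ≤ 1) :
    ∑ t ∈ Icc 1 T, b t / (γ + ∑ τ ∈ Ico 1 t, b τ) ≤
      2 * (Real.log (γ + ∑ t ∈ Icc 1 T, b t) - Real.log γ) := by
  induction T with
  | zero => simp
  | succ T ih =>
    have hb' : ∀ t ∈ Icc 1 T, 0 ≤ b t ∧ b t ≤ 1 := fun t ht =>
      hb t (Icc_subset_Icc_right T.le_succ ht)
    have hpartial : 1 ≤ γ + ∑ t ∈ Icc 1 T, b t := le_add_of_le_of_nonneg hγ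
      (sum_nonneg fun t ht => (hb' t ht).1)
    obtain ⟨hbT0, hbT1⟩ := hb (T + 1) (right_mem_Icc.2 (by omega))
    rw [sum_Icc_succ_top (by omega), sum_Icc_succ_top (by omega), Ico_add_one_right_eq_Icc,
      ← add_assoc]
    linarith [ih hb', div_le_two_mul_log_add_sub_log hpartial hbT0 (by linarith)]

lemma sum_div_add_partial_sum_le_two_mul_log {b : ℕ → ℝ} {γ : ℝ} (hγ : 1 ≤ γ) (T : ℕ)
    (hb : ∀ t ∈ Icc 1 T, 0 ≤ b t ∧ b t ≤ 1) :
    ∑ t ∈ Icc 1 T, b t / (γ + ∑ τ ∈ Ico 1 t, b τ) ≤ 2 * Real.log (1 + T / γ) := by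
  have hγ0 : 0 < γ := one_pos.trans_le hγ
  have hsum : ∑ t ∈ Icc 1 T, b t ≤ T := by
    simpa using sum_le_sum fun t ht => (hb t ht).2
  have hlog : Real.log (γ + ∑ t ∈ Icc 1 T, b t) ≤ Real.log (γ + T) :=
    Real.log_le_log (by linarith [sum_nonneg fun t ht => (hb t ht).1]) (by linarith)
  have hquot : Real.log (γ + T) - Real.log γ = Real.log (1 + T / γ) := by
    rw [← Real.log_div (by positivity) hγ0.ne', add_div, div_self hγ0.ne']
  linarith [sum_div_add_partial_sum_le_two_mul_log_sub hγ T hb]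

lemma designMatrix_eq_diagonal {d : ℕ} (x : ℕ → Fin d → ℝ) (γ : ℝ) (t : ℕ) :
    designMatrix x γ t = diagonal fun i => γ + ∑ τ ∈ Ico 1 t, x τ i := by
  ext i j
  rcases eq_or_ne i j with rfl | hij
  · simp [designMatrix, Matrix.sum_apply]
  · simp [designMatrix, Matrix.sum_apply, hij]

lemma dotProduct_diagonal_mulVec_self {ι R : Type*} [Fintype ι] [DecidableEq ι] [CommSemiring R]
    (a v : ι → R) : v ⬝ᵥ diagonal a *ᵥ v = ∑ i, a i * v i ^ 2 := by
  simp only [dotProduct, mulVec_diagonal]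
  exact sum_congr rfl fun i _ => by ring

lemma sq_dotProduct_le_mul_diagonal {ι R : Type*} [Fintype ι] [DecidableEq ι] [Field R]
    [LinearOrder R] [IsStrictOrderedRing R] {a : ι → R} (ha : ∀ i, 0 < a i) (x v : ι → R) :
    (x ⬝ᵥ v) ^ 2 ≤ (∑ i, x i ^ 2 / a i) * (v ⬝ᵥ diagonal a *ᵥ v) := by
  rw [dotProduct_diagonal_mulVec_self]
  refine sum_sq_le_sum_mul_sum_of_sq_le_mul _ (fun i _ => div_nonneg (sq_nonneg _) (ha i).le)
    (fun i _ => mul_nonneg (ha i).le (sq_nonneg _)) fun i _ => le_of_eq ?_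
  field_simp [(ha i).ne']

section Ellipsoid

variable {ι R : Type*} [Fintype ι] [DecidableEq ι] [Field R] [LinearOrder R]
  [IsStrictOrderedRing R] {a : ι → R} {c θ₁ θ₂ x : ι → R} {β : R}

lemma sq_dotProduct_sub_le_of_mem_ellipsoid (ha : ∀ i, 0 < a i)
    (h₁ : (θ₁ - c) ⬝ᵥ diagonal a *ᵥ (θ₁ - c) ≤ β) (h₂ : (θ₂ - c) ⬝ᵥ diagonal a *ᵥ (θ₂ - c) ≤ β) :
    (x ⬝ᵥ θ₁ - x ⬝ᵥ θ₂) ^ 2 ≤ 4 * β * ∑ i, x i ^ 2 / a i := by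
  have hW : 0 ≤ ∑ i, x i ^ 2 / a i := sum_nonneg fun i _ => div_nonneg (sq_nonneg _) (ha i).le
  have hsplit : x ⬝ᵥ θ₁ - x ⬝ᵥ θ₂ = x ⬝ᵥ (θ₁ - c) - x ⬝ᵥ (θ₂ - c) := by
    simp only [dotProduct_sub]
    ring
  have hbound₁ := (sq_dotProduct_le_mul_diagonal ha x (θ₁ - c)).trans
    (mul_le_mul_of_nonneg_left h₁ hW)
  have hbound₂ := (sq_dotProduct_le_mul_diagonal ha x (θ₂ - c)).trans
    (mul_le_mul_of_nonneg_left h₂ hW)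
  rw [hsplit]
  nlinarith [sq_nonneg (x ⬝ᵥ (θ₁ - c) + x ⬝ᵥ (θ₂ - c))]

lemma sq_regret_le_of_optimistic (ha : ∀ i, 0 < a i) {xstar θstar : ι → R}
    (hθ₁ : (θ₁ - c) ⬝ᵥ diagonal a *ᵥ (θ₁ - c) ≤ β)
    (hθstar : (θstar - c) ⬝ᵥ diagonal a *ᵥ (θstar - c) ≤ β)
    (hopt : xstar ⬝ᵥ θstar ≤ x ⬝ᵥ θ₁) (hbest : x ⬝ᵥ θstar ≤ xstar ⬝ᵥ θstar) :
    (xstar ⬝ᵥ θstar - x ⬝ᵥ θstar) ^ 2 ≤ 4 * β * ∑ i, x i ^ 2 / a i :=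
  (pow_le_pow_left₀ (sub_nonneg.2 hbest) (by linarith) 2).trans
    (sq_dotProduct_sub_le_of_mem_ellipsoid ha hθ₁ hθstar)

end Ellipsoid

theorem sum_squared_regret_le_general
    {d : ℕ} (γ : ℝ) (hγ : 1 ≤ γ)
    (θstar : Fin d → ℝ) (T : ℕ)
    (β : ℕ → ℝ) (hβ0 : ∀ t, 0 ≤ β t) (hβT : ∀ t, t ≤ T → β t ≤ β T)
    -- nonempty action sets of zero-one vectors and the chosen actions
    (Xset : ℕ → Set (Fin d → ℝ))
    (hX01 : ∀ t, Xset t ⊆ {v | ∀ i, v i = 0 ∨ v i = 1})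
    (x : ℕ → Fin d → ℝ) (hx : ∀ t, 1 ≤ t → t ≤ T → x t ∈ Xset t)
    -- confidence sets contained in the `A_t`-ellipsoids of radius `√β_t` around `θ̂_t`
    (θhat : ℕ → Fin d → ℝ) (C : ℕ → Set (Fin d → ℝ))
    (hC : ∀ t, C t ⊆
      {θ | (θ - θhat t) ⬝ᵥ (designMatrix x γ t).mulVec (θ - θhat t) ≤ β t})
    -- the actions are chosen optimistically
    (hopt : ∀ t, 1 ≤ t → t ≤ T →
      ∃ θt ∈ C t, ∀ x' ∈ Xset t, ∀ θ' ∈ C t, x' ⬝ᵥ θ' ≤ x t ⬝ᵥ θt)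
    -- the true parameter lies in every confidence set
    (hθstar : ∀ t, 1 ≤ t → t ≤ T → θstar ∈ C t)
    -- `xstar t` attains `max_{x ∈ X_t} ⟨x, θ*⟩`
    (xstar : ℕ → Fin d → ℝ)
    (hxstar : ∀ t, 1 ≤ t → t ≤ T →
      xstar t ∈ Xset t ∧ ∀ x' ∈ Xset t, x' ⬝ᵥ θstar ≤ xstar t ⬝ᵥ θstar) :
    ∑ t ∈ Finset.Icc 1 T, (xstar t ⬝ᵥ θstar - x t ⬝ᵥ θstar) ^ 2 ≤
      8 * β T * d * Real.log (1 + T / γ) := by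
  set w : ℕ → Fin d → ℝ := fun t i => γ + ∑ τ ∈ Ico 1 t, x τ i
  have hx01 : ∀ t ∈ Icc 1 T, ∀ i, 0 ≤ x t i ∧ x t i ≤ 1 := by
    intro t ht i
    obtain ⟨ht1, htT⟩ := mem_Icc.1 ht
    rcases hX01 t (hx t ht1 htT) i with h | h <;> simp [h]
  have hw : ∀ t ≤ T, ∀ i, 0 < w t i := fun t htT i =>
    add_pos_of_pos_of_nonneg (one_pos.trans_le hγ) (sum_nonneg fun τ hτ =>
      (hx01 τ (mem_Icc.2 ⟨(mem_Ico.1 hτ).1, (mem_Ico.1 hτ).2.le.trans htT⟩) i).1)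
  have hround : ∀ t ∈ Icc 1 T,
      (xstar t ⬝ᵥ θstar - x t ⬝ᵥ θstar) ^ 2 ≤ 4 * β T * ∑ i, x t i / w t i := by
    intro t ht
    obtain ⟨ht1, htT⟩ := mem_Icc.1 ht
    have hellipsoid : ∀ θ ∈ C t, (θ - θhat t) ⬝ᵥ diagonal (w t) *ᵥ (θ - θhat t) ≤ β t :=
      fun θ hθ => designMatrix_eq_diagonal x γ t ▸ hC t hθ
    obtain ⟨θt, hθtC, hθt⟩ := hopt t ht1 htT
    obtain ⟨hxstarX, hxstar_max⟩ := hxstar t ht1 htT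
    have hsq_le : ∑ i, x t i ^ 2 / w t i ≤ ∑ i, x t i / w t i := sum_le_sum fun i _ =>
      div_le_div_of_nonneg_right (by nlinarith [hx01 t ht i]) (hw t htT i).le
    calc _ ≤ 4 * β t * ∑ i, x t i ^ 2 / w t i :=
          sq_regret_le_of_optimistic (hw t htT) (hellipsoid θt hθtC)
            (hellipsoid θstar (hθstar t ht1 htT)) (hθt _ hxstarX _ (hθstar t ht1 htT))
            (hxstar_max _ (hx t ht1 htT))
      _ ≤ 4 * β T * ∑ i, x t i / w t i :=
          mul_le_mul (by linarith [hβT t htT]) hsq_le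
            (sum_nonneg fun i _ => div_nonneg (sq_nonneg _) (hw t htT i).le)
            (by linarith [hβ0 T])
  calc _ ≤ ∑ t ∈ Icc 1 T, 4 * β T * ∑ i, x t i / w t i := sum_le_sum hround
    _ = 4 * β T * ∑ i, ∑ t ∈ Icc 1 T, x t i / w t i := by rw [← mul_sum, sum_comm]
    _ ≤ 4 * β T * ∑ _i : Fin d, 2 * Real.log (1 + T / γ) := by
        have := hβ0 T
        gcongr with i
        exact sum_div_add_partial_sum_le_two_mul_log hγ T fun t ht => hx01 t ht i
    _ = 8 * β T * d * Real.log (1 + T / γ) := by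
        rw [sum_const, card_univ, Fintype.card_fin, nsmul_eq_mul]
        ring

/-- Lemma 13 of the paper (sum of squared instantaneous regrets): in the deterministic OFU
setup with horizon `T`, if `θ* ∈ C_t` for every `t ≤ T`, then
`Σ_{t=1}^T r_t² ≤ 8 β_T d log(1 + T/γ)`. -/
theorem sum_squared_regret_le
    {d : ℕ} (hd : 1 ≤ d) (γ : ℝ) (hγ : 1 ≤ γ)
    (θstar : Fin d → ℝ) (T : ℕ)
    (β : ℕ → ℝ) (hβ0 : ∀ t, 0 ≤ β t) (hβT : ∀ t, t ≤ T → β t ≤ β T)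
    -- nonempty action sets of zero-one vectors and the chosen actions
    (Xset : ℕ → Set (Fin d → ℝ))
    (hX01 : ∀ t, Xset t ⊆ {v | ∀ i, v i = 0 ∨ v i = 1})
    (x : ℕ → Fin d → ℝ) (hx : ∀ t, 1 ≤ t → t ≤ T → x t ∈ Xset t)
    -- confidence sets contained in the `A_t`-ellipsoids of radius `√β_t` around `θ̂_t`
    (θhat : ℕ → Fin d → ℝ) (C : ℕ → Set (Fin d → ℝ))
    (hC : ∀ t, C t ⊆
      {θ | (θ - θhat t) ⬝ᵥ (designMatrix x γ t).mulVec (θ - θhat t) ≤ β t})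
    -- the actions are chosen optimistically
    (hopt : ∀ t, 1 ≤ t → t ≤ T →
      ∃ θt ∈ C t, ∀ x' ∈ Xset t, ∀ θ' ∈ C t, x' ⬝ᵥ θ' ≤ x t ⬝ᵥ θt)
    -- the true parameter lies in every confidence set
    (hθstar : ∀ t, 1 ≤ t → t ≤ T → θstar ∈ C t)
    -- `xstar t` attains `max_{x ∈ X_t} ⟨x, θ*⟩`
    (xstar : ℕ → Fin d → ℝ)
    (hxstar : ∀ t, 1 ≤ t → t ≤ T →
      xstar t ∈ Xset t ∧ ∀ x' ∈ Xset t, x' ⬝ᵥ θstar ≤ xstar t ⬝ᵥ θstar) :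
    ∑ t ∈ Finset.Icc 1 T, (xstar t ⬝ᵥ θstar - x t ⬝ᵥ θstar) ^ 2 ≤
      8 * β T * d * Real.log (1 + T / γ) :=
  sum_squared_regret_le_general γ hγ θstar T β hβ0 hβT Xset hX01 x hx θhat C hC hopt hθstar xstar
    hxstar
end

section
/- Fix N, M, R ≥ 1 and 0 < ε ≤ 1, and let S = { Θ ∈ ℝ^{N×M} : rank(Θ) ≤ R and ‖Θ‖_F ≤ 1 }. There exists a finite set S^ε ⊆ ℝ^{N×M} with cardinality |S^ε| ≤ (9/ε)^{(N+M+1)R} such that for every Θ ∈ S there exists Θ̄ ∈ S^ε with ‖Θ − Θ̄‖_F ≤ ε. -/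
open Finset

/-- Frobenius norm of a real matrix, `‖Θ‖_F = √(Σ_{u,i} θ_{ui}²)`. -/
noncomputable def frobNorm {N M : ℕ} (Θ : Matrix (Fin N) (Fin M) ℝ) : ℝ :=
  Real.sqrt (∑ u, ∑ i, Θ u i ^ 2)

/-!
By the singular value decomposition, padded with zeros, every `Θ` of rank at most `R` is
`∑ₖ σₖ uₖ vₖᵀ` over `k < R` with `‖σ‖ = ‖Θ‖_F` and with pairwise orthogonal `uₖ` and `vₖ` of norm
at most one. A volumetric argument gives `ε/3`-nets of size `(9/ε)^d` of any part of the unit ball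
of a `d`-dimensional normed space; take them for `σ` in the unit ball of `ℝ^R` and for the
orthogonal families `(uₖ)` and `(vₖ)` in `(ℝ^N)^R` and `(ℝ^M)^R` with the maximum of the norms.
Replacing `σ`, `u` and `v` one at a time by their approximations moves `Θ` by at most `ε/3` each
in the Frobenius norm: Pythagoras applies because the `vₖ`, resp. the approximating `ūₖ`, are
orthogonal, which is why the nets are taken inside the sets of orthogonal families.
-/

open Matrix Metric MeasureTheory Module WithLp
open scoped InnerProductSpace NNReal ENNReal

attribute [local instance] Matrix.frobeniusNormedAddCommGroup

lemma packingNumber_ne_top_of_totallyBounded {X : Type*} [PseudoEMetricSpace X] {A : Set X}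
    (hA : TotallyBounded A) {δ : ℝ≥0} (hδ : δ ≠ 0) : packingNumber δ A ≠ ⊤ := by
  obtain ⟨C, -, hCfin, hC⟩ := exists_finite_isCover_of_totallyBounded (ε := δ / 2) (by simpa) hA
  refine ne_top_of_le_ne_top (Set.encard_ne_top_iff.mpr hCfin) ?_
  calc packingNumber δ A = packingNumber (2 * (δ / 2)) A := by rw [mul_div_cancel₀ _ two_ne_zero]
    _ ≤ externalCoveringNumber (δ / 2) A := packingNumber_two_mul_le_externalCoveringNumber _ _
    _ ≤ C.encard := hC.externalCoveringNumber_le_encard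

lemma Metric.IsCover.exists_norm_sub_le {E : Type*} [SeminormedAddCommGroup E] {δ : ℝ≥0}
    {A N : Set E} (h : IsCover δ A N) {x : E} (hx : x ∈ A) : ∃ y ∈ N, ‖x - y‖ ≤ δ := by
  obtain ⟨y, hy, hxy⟩ := h hx
  refine ⟨y, hy, ?_⟩
  change edist x y ≤ δ at hxy
  rwa [edist_le_coe, ← NNReal.coe_le_coe, coe_nndist, dist_eq_norm] at hxy

section Net

variable {E : Type*} [NormedAddCommGroup E] [NormedSpace ℝ E] [FiniteDimensional ℝ E]

lemma card_le_of_isSeparated_of_subset_closedBall {δ : ℝ≥0} (hδ : 0 < δ) {F : Finset E}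
    (hF : (F : Set E) ⊆ closedBall 0 1) (hsep : IsSeparated δ (F : Set E)) :
    (#F : ℝ) ≤ (1 + 2 / δ) ^ finrank ℝ E := by
  borelize E
  set μ : Measure E := Measure.addHaar
  have hδ2 : (0 : ℝ) < δ / 2 := by positivity
  have hdisj : (F : Set E).PairwiseDisjoint fun x => ball x (δ / 2) := fun x hx y hy hxy =>
    ball_disjoint_ball <| by
      have : (δ : ℝ≥0∞) < edist x y := hsep hx hy hxy
      rw [edist_nndist, ENNReal.coe_lt_coe, ← NNReal.coe_lt_coe, coe_nndist] at this
      linarith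
  have hsub : (⋃ x ∈ F, ball x (δ / 2)) ⊆ ball 0 (1 + δ / 2) :=
    Set.iUnion₂_subset fun x hx =>
      ball_subset_ball' (by have := mem_closedBall.mp (hF hx); linarith)
  have hvol : (#F : ℝ) * (δ / 2) ^ finrank ℝ E ≤ (1 + δ / 2) ^ finrank ℝ E := by
    have := measure_mono (μ := μ) hsub
    rwa [measure_biUnion_finset hdisj fun _ _ => measurableSet_ball,
      Finset.sum_congr rfl fun x _ => μ.addHaar_ball_of_pos x hδ2, Finset.sum_const, nsmul_eq_mul,
      μ.addHaar_ball_of_pos (0 : E) (r := 1 + δ / 2) (by positivity), ← mul_assoc,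
      ENNReal.mul_le_mul_iff_left (measure_ball_pos μ _ one_pos).ne' measure_ball_lt_top.ne,
      ← ENNReal.ofReal_natCast, ← ENNReal.ofReal_mul (by positivity),
      ENNReal.ofReal_le_ofReal_iff (by positivity)] at this
  calc (#F : ℝ) ≤ ((1 + δ / 2) / (δ / 2)) ^ finrank ℝ E := by
        rw [div_pow, le_div_iff₀ (by positivity)]; exact hvol
    _ = (1 + 2 / δ) ^ finrank ℝ E := by congr 1; field_simp; ring

theorem exists_finset_isCover_card_le {A : Set E} (hA : A ⊆ closedBall 0 1) {δ : ℝ≥0}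
    (hδ : 0 < δ) (hδ1 : δ ≤ 1) :
    ∃ F : Finset E, ↑F ⊆ A ∧ IsCover δ A F ∧ (#F : ℝ) ≤ (3 / δ) ^ finrank ℝ E := by
  have hpack := packingNumber_ne_top_of_totallyBounded
    ((isCompact_closedBall 0 1).totallyBounded.subset hA) hδ.ne'
  have hfin : (maximalSeparatedSet δ A).Finite := by
    rw [← Set.encard_ne_top_iff, encard_maximalSeparatedSet hpack]; exact hpack
  refine ⟨hfin.toFinset, by simpa using maximalSeparatedSet_subset,
    by simpa using isCover_maximalSeparatedSet hpack, ?_⟩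
  calc (#hfin.toFinset : ℝ) ≤ (1 + 2 / δ) ^ finrank ℝ E :=
        card_le_of_isSeparated_of_subset_closedBall hδ
          (by simpa using maximalSeparatedSet_subset.trans hA)
          (by simpa using isSeparated_maximalSeparatedSet)
    _ ≤ (3 / δ) ^ finrank ℝ E := by
        gcongr
        rw [le_div_iff₀ (by positivity), add_mul, div_mul_cancel₀ _ (by positivity)]
        have : (δ : ℝ) ≤ 1 := hδ1
        linarith

end Net

def PairwiseOrthogonal {ι F : Type*} [NormedAddCommGroup F] [InnerProductSpace ℝ F] (v : ι → F) :
    Prop :=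
  Pairwise fun j k => ⟪v j, v k⟫_ℝ = 0

lemma norm_sum_smul_sq {ι F : Type*} [Fintype ι] [NormedAddCommGroup F] [InnerProductSpace ℝ F]
    {v : ι → F} (hv : PairwiseOrthogonal v) (c : ι → ℝ) :
    ‖∑ k, c k • v k‖ ^ 2 = ∑ k, c k ^ 2 * ‖v k‖ ^ 2 := by
  rw [← real_inner_self_eq_norm_sq, sum_inner]
  refine Finset.sum_congr rfl fun j _ => ?_
  rw [inner_sum, Finset.sum_eq_single j
      (fun k _ hkj => by simp [inner_smul_left, inner_smul_right, hv hkj.symm]) (by simp),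
    inner_smul_left, inner_smul_right, real_inner_self_eq_norm_sq, conj_trivial]
  ring

lemma frobenius_norm_sq_eq_sum_norm_row_sq {m n : Type*} [Fintype m] [Fintype n]
    (A : Matrix m n ℝ) : ‖A‖ ^ 2 = ∑ a, ‖toLp 2 (A a)‖ ^ 2 :=
  PiLp.norm_sq_eq_of_L2 _ (toLp 2 fun a => toLp 2 (A a))

lemma frobNorm_eq_norm {N M : ℕ} (Θ : Matrix (Fin N) (Fin M) ℝ) : frobNorm Θ = ‖Θ‖ := by
  rw [frobNorm, ← Real.sqrt_sq (norm_nonneg Θ), frobenius_norm_sq_eq_sum_norm_row_sq]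
  simp_rw [EuclideanSpace.real_norm_sq_eq]

section OuterSum

variable {ι m n : Type*} [Fintype ι]

/-- `U diag(σ) Vᵀ` for the matrices with columns `Uₖ` and `Vₖ`. -/
noncomputable def outerSum (σ : EuclideanSpace ℝ ι) (U : ι → EuclideanSpace ℝ m)
    (V : ι → EuclideanSpace ℝ n) : Matrix m n ℝ :=
  ∑ k, σ k • vecMulVec (U k) (V k)

lemma toLp_outerSum_apply (σ : EuclideanSpace ℝ ι) (U : ι → EuclideanSpace ℝ m)
    (V : ι → EuclideanSpace ℝ n) (a : m) :
    toLp 2 (outerSum σ U V a) = ∑ k, (σ k * U k a) • V k := by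
  ext b
  simp [outerSum, Matrix.sum_apply, vecMulVec_apply, mul_assoc]

lemma outerSum_transpose (σ : EuclideanSpace ℝ ι) (U : ι → EuclideanSpace ℝ m)
    (V : ι → EuclideanSpace ℝ n) : (outerSum σ U V)ᵀ = outerSum σ V U := by
  simp [outerSum, transpose_sum, transpose_vecMulVec]

lemma outerSum_sub_outerSum (σ σ' : EuclideanSpace ℝ ι) (U U' : ι → EuclideanSpace ℝ m)
    (V V' : ι → EuclideanSpace ℝ n) :
    outerSum σ U V - outerSum σ' U' V' =
      outerSum (σ - σ') U V + outerSum σ' (U - U') V + outerSum σ' U' (V - V') := by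
  ext a b
  simp only [outerSum, Matrix.sub_apply, Matrix.add_apply, Matrix.sum_apply, Matrix.smul_apply,
    vecMulVec_apply, ← Finset.sum_sub_distrib, ← Finset.sum_add_distrib]
  refine Finset.sum_congr rfl fun k _ => ?_
  simp only [Pi.sub_apply, PiLp.sub_apply, smul_eq_mul]
  ring

variable [Fintype m] [Fintype n]

lemma norm_outerSum_sq (σ : EuclideanSpace ℝ ι) (U : ι → EuclideanSpace ℝ m)
    {V : ι → EuclideanSpace ℝ n} (hV : PairwiseOrthogonal V) :
    ‖outerSum σ U V‖ ^ 2 = ∑ k, σ k ^ 2 * ‖U k‖ ^ 2 * ‖V k‖ ^ 2 := by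
  simp_rw [frobenius_norm_sq_eq_sum_norm_row_sq, toLp_outerSum_apply, norm_sum_smul_sq hV]
  rw [Finset.sum_comm]
  refine Finset.sum_congr rfl fun k _ => ?_
  simp_rw [EuclideanSpace.real_norm_sq_eq (U k), Finset.mul_sum, Finset.sum_mul]
  exact Finset.sum_congr rfl fun a _ => by ring

lemma norm_outerSum_le_of_right (σ : EuclideanSpace ℝ ι) (U : ι → EuclideanSpace ℝ m)
    {V : ι → EuclideanSpace ℝ n} (hV : PairwiseOrthogonal V) :
    ‖outerSum σ U V‖ ≤ ‖σ‖ * ‖U‖ * ‖V‖ := by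
  refine le_of_sq_le_sq ?_ (by positivity)
  rw [norm_outerSum_sq σ U hV, mul_pow, mul_pow, EuclideanSpace.real_norm_sq_eq, Finset.sum_mul,
    Finset.sum_mul]
  gcongr with k
  · exact norm_le_pi_norm U k
  · exact norm_le_pi_norm V k

lemma norm_outerSum_le_of_left (σ : EuclideanSpace ℝ ι) {U : ι → EuclideanSpace ℝ m}
    (V : ι → EuclideanSpace ℝ n) (hU : PairwiseOrthogonal U) :
    ‖outerSum σ U V‖ ≤ ‖σ‖ * ‖U‖ * ‖V‖ := by
  rw [← frobenius_norm_transpose, outerSum_transpose, mul_right_comm]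
  exact norm_outerSum_le_of_right σ V hU

theorem norm_outerSum_sub_outerSum_le {σ σ' : EuclideanSpace ℝ ι}
    {U U' : ι → EuclideanSpace ℝ m} {V V' : ι → EuclideanSpace ℝ n} (hU : ‖U‖ ≤ 1)
    (hV : ‖V‖ ≤ 1) (hU' : ‖U'‖ ≤ 1) (hVo : PairwiseOrthogonal V) (hU'o : PairwiseOrthogonal U') :
    ‖outerSum σ U V - outerSum σ' U' V'‖ ≤ ‖σ - σ'‖ + ‖σ'‖ * (‖U - U'‖ + ‖V - V'‖) := by
  rw [outerSum_sub_outerSum]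
  calc _ ≤ ‖outerSum (σ - σ') U V‖ + ‖outerSum σ' (U - U') V‖ + ‖outerSum σ' U' (V - V')‖ :=
        norm_add₃_le
    _ ≤ ‖σ - σ'‖ * ‖U‖ * ‖V‖ + ‖σ'‖ * ‖U - U'‖ * ‖V‖ + ‖σ'‖ * ‖U'‖ * ‖V - V'‖ := by
        gcongr
        · exact norm_outerSum_le_of_right _ _ hVo
        · exact norm_outerSum_le_of_right _ _ hVo
        · exact norm_outerSum_le_of_left _ _ hU'o
    _ ≤ ‖σ - σ'‖ * 1 * 1 + ‖σ'‖ * ‖U - U'‖ * 1 + ‖σ'‖ * 1 * ‖V - V'‖ := by gcongr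
    _ = ‖σ - σ'‖ + ‖σ'‖ * (‖U - U'‖ + ‖V - V'‖) := by ring

end OuterSum

lemma OrthonormalBasis.sum_vecMulVec_self {ι n : Type*} [Fintype ι] [Fintype n] [DecidableEq n]
    (b : OrthonormalBasis ι ℝ (EuclideanSpace ℝ n)) : ∑ i, vecMulVec (b i) (b i) = 1 := by
  ext a c
  have := b.sum_inner_mul_inner (EuclideanSpace.single a 1) (EuclideanSpace.single c 1)
  simp only [EuclideanSpace.inner_single_left, EuclideanSpace.inner_single_right, conj_trivial,
    one_mul, PiLp.single_apply] at this
  simp only [Matrix.sum_apply, vecMulVec_apply, this, one_apply, eq_comm]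

lemma sum_vecMulVec_mulVec_self {ι m n : Type*} [Fintype ι] [Fintype n] [DecidableEq n]
    (Θ : Matrix m n ℝ) (b : OrthonormalBasis ι ℝ (EuclideanSpace ℝ n)) :
    ∑ i, vecMulVec (Θ *ᵥ b i) (b i) = Θ := by
  simp_rw [← mul_vecMulVec, ← Matrix.mul_sum, b.sum_vecMulVec_self, Matrix.mul_one]

lemma inner_mulVec_eigenvectorBasis {m n : Type*} [Fintype m] [Fintype n] [DecidableEq n]
    {Θ : Matrix m n ℝ} (hA : (Θᴴ * Θ).IsHermitian) (i j : n) :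
    ⟪toLp 2 (Θ *ᵥ hA.eigenvectorBasis i), toLp 2 (Θ *ᵥ hA.eigenvectorBasis j)⟫_ℝ =
      if i = j then hA.eigenvalues i else 0 := by
  have h := orthonormal_iff_ite.mp hA.eigenvectorBasis.orthonormal i j
  rw [EuclideanSpace.inner_eq_star_dotProduct] at h ⊢
  simp only [star_trivial] at h ⊢
  rw [dotProduct_comm, dotProduct_mulVec, ← mulVec_transpose,
    ← conjTranspose_eq_transpose_of_trivial, mulVec_mulVec, hA.mulVec_eigenvectorBasis,
    smul_dotProduct, dotProduct_comm, h]
  split_ifs with hij <;> simp [hij]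

lemma norm_smul_inv_norm_smul {F : Type*} [NormedAddCommGroup F] [NormedSpace ℝ F] (x : F) :
    ‖x‖ • ‖x‖⁻¹ • x = x := by
  rcases eq_or_ne x 0 with rfl | hx
  · simp
  · rw [smul_inv_smul₀ (norm_ne_zero_iff.mpr hx)]

lemma norm_inv_norm_smul_le_one {F : Type*} [NormedAddCommGroup F] [NormedSpace ℝ F] (x : F) :
    ‖‖x‖⁻¹ • x‖ ≤ 1 := by
  rw [norm_smul, norm_inv, norm_norm]
  exact inv_mul_le_one_of_le₀ le_rfl (norm_nonneg x)

/-- The singular value decomposition, indexed by the columns of `Θ`. -/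
theorem Matrix.exists_outerSum_eq {m n : Type*} [Fintype m] [Fintype n] [DecidableEq n]
    (Θ : Matrix m n ℝ) :
    ∃ (σ : EuclideanSpace ℝ n) (U : n → EuclideanSpace ℝ m) (V : n → EuclideanSpace ℝ n),
      ‖σ‖ = ‖Θ‖ ∧ ‖U‖ ≤ 1 ∧ ‖V‖ ≤ 1 ∧ PairwiseOrthogonal U ∧ PairwiseOrthogonal V ∧
      Fintype.card {k // σ k ≠ 0} = Θ.rank ∧ outerSum σ U V = Θ := by
  set hA := isHermitian_conjTranspose_mul_self Θ
  set w := hA.eigenvectorBasis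
  set z : n → EuclideanSpace ℝ m := fun i => toLp 2 (Θ *ᵥ w i)
  have hz : ∀ i j, ⟪z i, z j⟫_ℝ = if i = j then hA.eigenvalues i else 0 :=
    inner_mulVec_eigenvectorBasis hA
  set σ : EuclideanSpace ℝ n := toLp 2 fun i => ‖z i‖
  set U : n → EuclideanSpace ℝ m := fun i => ‖z i‖⁻¹ • z i
  have hσU : ∀ i, σ i • U i = z i := fun i => norm_smul_inv_norm_smul (z i)
  have hw : PairwiseOrthogonal w := fun i j hij => w.orthonormal.2 hij
  have hΘ : outerSum σ U w = Θ := by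
    conv_rhs => rw [← sum_vecMulVec_mulVec_self Θ w]
    refine Finset.sum_congr rfl fun i _ => ?_
    rw [← smul_vecMulVec, ← WithLp.ofLp_smul, hσU]
  refine ⟨σ, U, w, ?_, ?_, ?_, ?_, hw, ?_, hΘ⟩
  · refine (sq_eq_sq₀ (norm_nonneg _) (norm_nonneg _)).mp ?_
    rw [← hΘ, norm_outerSum_sq σ U hw, EuclideanSpace.real_norm_sq_eq]
    refine Finset.sum_congr rfl fun i _ => ?_
    have : σ i * ‖U i‖ = σ i :=
      calc σ i * ‖U i‖ = ‖σ i • U i‖ := by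
            rw [norm_smul (σ i), Real.norm_of_nonneg (show 0 ≤ σ i from norm_nonneg (z i))]
        _ = σ i := congrArg norm (hσU i)
    rw [w.orthonormal.1 i, one_pow, mul_one, ← mul_pow, this]
  · exact (pi_norm_le_iff_of_nonneg zero_le_one).mpr fun i => norm_inv_norm_smul_le_one (z i)
  · exact (pi_norm_le_iff_of_nonneg zero_le_one).mpr fun i => (w.orthonormal.1 i).le
  · intro i j hij
    simp only [U, inner_smul_left, inner_smul_right, hz, if_neg hij, mul_zero]
  · rw [← rank_conjTranspose_mul_self, hA.rank_eq_card_non_zero_eigs]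
    refine Fintype.card_congr (Equiv.subtypeEquivRight fun i => ?_)
    have : ‖z i‖ ^ 2 = hA.eigenvalues i := by rw [← real_inner_self_eq_norm_sq, hz, if_pos rfl]
    simp only [σ, ← this, ne_eq, pow_eq_zero_iff two_ne_zero]

section ExtendByZero

open Function

variable {ι κ : Type*} {e : ι → κ}

lemma norm_extend_zero_le [Fintype ι] [Fintype κ] {E : Type*} [SeminormedAddCommGroup E]
    (he : Injective e) (f : ι → E) : ‖extend e f 0‖ ≤ ‖f‖ := by
  refine (pi_norm_le_iff_of_nonneg (norm_nonneg f)).mpr fun j => ?_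
  by_cases hj : ∃ k, e k = j
  · obtain ⟨k, rfl⟩ := hj
    rw [he.extend_apply]
    exact norm_le_pi_norm f k
  · rw [extend_apply' _ _ _ hj, Pi.zero_apply, norm_zero]
    exact norm_nonneg f

lemma PairwiseOrthogonal.extend_zero {F : Type*} [NormedAddCommGroup F] [InnerProductSpace ℝ F]
    {f : ι → F} (hf : PairwiseOrthogonal f) (he : Injective e) :
    PairwiseOrthogonal (extend e f 0) := by
  intro j j' hjj'
  by_cases hj : ∃ k, e k = j
  · by_cases hj' : ∃ k, e k = j'
    · obtain ⟨k, rfl⟩ := hj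
      obtain ⟨k', rfl⟩ := hj'
      rw [he.extend_apply, he.extend_apply]
      exact hf (ne_of_apply_ne e hjj')
    · simp [extend_apply' _ _ _ hj']
  · simp [extend_apply' _ _ _ hj]

lemma outerSum_eq_of_injective [Fintype ι] [Fintype κ] {m n : Type*} (he : Injective e)
    {σ : EuclideanSpace ℝ ι} {U : ι → EuclideanSpace ℝ m} {V : ι → EuclideanSpace ℝ n}
    {σ' : EuclideanSpace ℝ κ} {U' : κ → EuclideanSpace ℝ m} {V' : κ → EuclideanSpace ℝ n}
    (hσ' : ∀ j ∉ Set.range e, σ' j = 0) (hσ : ∀ k, σ' (e k) = σ k) (hU : ∀ k, U' (e k) = U k)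
    (hV : ∀ k, V' (e k) = V k) : outerSum σ' U' V' = outerSum σ U V :=
  (Fintype.sum_of_injective e he _ _ (fun j hj => by simp [hσ' j hj]) fun k => by
    simp [hσ, hU, hV]).symm

lemma EuclideanSpace.norm_eq_of_injective [Fintype ι] [Fintype κ] (he : Injective e)
    {σ : EuclideanSpace ℝ ι} {σ' : EuclideanSpace ℝ κ} (hσ' : ∀ j ∉ Set.range e, σ' j = 0)
    (hσ : ∀ k, σ' (e k) = σ k) : ‖σ'‖ = ‖σ‖ := by
  refine (sq_eq_sq₀ (norm_nonneg _) (norm_nonneg _)).mp ?_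
  simp_rw [EuclideanSpace.real_norm_sq_eq]
  exact (Fintype.sum_of_injective e he _ _ (fun j hj => by simp [hσ' j hj]) fun k => by
    simp [hσ]).symm

end ExtendByZero

theorem Matrix.exists_outerSum_eq_of_rank_le {m n κ : Type*} [Fintype m] [Fintype n]
    [DecidableEq n] [Fintype κ] (Θ : Matrix m n ℝ) (hΘ : Θ.rank ≤ Fintype.card κ) :
    ∃ (σ : EuclideanSpace ℝ κ) (U : κ → EuclideanSpace ℝ m) (V : κ → EuclideanSpace ℝ n),
      ‖σ‖ = ‖Θ‖ ∧ ‖U‖ ≤ 1 ∧ ‖V‖ ≤ 1 ∧ PairwiseOrthogonal U ∧ PairwiseOrthogonal V ∧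
      outerSum σ U V = Θ := by
  obtain ⟨σ, U, V, hσ, hU, hV, hUo, hVo, hcard, rfl⟩ := Θ.exists_outerSum_eq
  obtain ⟨e⟩ : Nonempty ({k // σ k ≠ 0} ↪ κ) :=
    Function.Embedding.nonempty_of_card_le (hcard.trans_le hΘ)
  set σs : EuclideanSpace ℝ {k // σ k ≠ 0} := toLp 2 fun k => σ k
  have hσs : ∀ k ∉ Set.range (Subtype.val : {k // σ k ≠ 0} → n), σ k = 0 := fun k hk => by
    by_contra h; exact hk ⟨⟨k, h⟩, rfl⟩
  have hσe : ∀ j ∉ Set.range e, Function.extend e σs 0 j = 0 := fun j hj =>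
    Function.extend_apply' _ _ _ hj
  refine ⟨toLp 2 (Function.extend e σs 0), Function.extend e (U ∘ Subtype.val) 0,
    Function.extend e (V ∘ Subtype.val) 0, ?_, ?_, ?_, ?_, ?_, ?_⟩
  · rw [← hσ, EuclideanSpace.norm_eq_of_injective e.injective hσe
      (fun k => e.injective.extend_apply _ _ k),
      EuclideanSpace.norm_eq_of_injective (σ := σs) Subtype.val_injective hσs fun k => rfl]
  · exact ((norm_extend_zero_le e.injective _).trans (pi_norm_comp_le U _)).trans hU
  · exact ((norm_extend_zero_le e.injective _).trans (pi_norm_comp_le V _)).trans hV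
  · exact PairwiseOrthogonal.extend_zero (hUo.comp_of_injective Subtype.val_injective) e.injective
  · exact PairwiseOrthogonal.extend_zero (hVo.comp_of_injective Subtype.val_injective) e.injective
  · rw [outerSum_eq_of_injective e.injective hσe (fun k => e.injective.extend_apply _ _ k)
      (fun k => e.injective.extend_apply _ _ k) (fun k => e.injective.extend_apply _ _ k),
      outerSum_eq_of_injective (σ := σs) Subtype.val_injective hσs (fun k => rfl) (fun k => rfl)
        fun k => rfl]
    rfl

theorem exists_finset_outerSum_net {ι m n : Type*} [Fintype ι] [Fintype m] [Fintype n] {ε : ℝ}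
    (hε0 : 0 < ε) (hε1 : ε ≤ 1) :
    ∃ S : Finset (Matrix m n ℝ),
      (#S : ℝ) ≤ (9 / ε) ^ ((Fintype.card m + Fintype.card n + 1) * Fintype.card ι) ∧
      ∀ (σ : EuclideanSpace ℝ ι) (U : ι → EuclideanSpace ℝ m) (V : ι → EuclideanSpace ℝ n),
        ‖σ‖ ≤ 1 → ‖U‖ ≤ 1 → ‖V‖ ≤ 1 → PairwiseOrthogonal U → PairwiseOrthogonal V →
        ∃ Θ' ∈ S, ‖outerSum σ U V - Θ'‖ ≤ ε := by
  set δ : ℝ≥0 := ⟨ε / 3, by positivity⟩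
  have hδ : 0 < δ := by rw [← NNReal.coe_pos]; change 0 < ε / 3; positivity
  have hδ1 : δ ≤ 1 := by rw [← NNReal.coe_le_coe]; change ε / 3 ≤ 1; linarith
  have h3δ : (3 / δ : ℝ) = 9 / ε := by
    change 3 / (ε / 3) = 9 / ε
    field_simp
    norm_num
  obtain ⟨Fσ, hFσ, hσcov, hσcard⟩ :=
    exists_finset_isCover_card_le (subset_refl (closedBall (0 : EuclideanSpace ℝ ι) 1)) hδ hδ1
  obtain ⟨FU, hFU, hUcov, hUcard⟩ := exists_finset_isCover_card_le
    (A := {U : ι → EuclideanSpace ℝ m | ‖U‖ ≤ 1 ∧ PairwiseOrthogonal U})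
    (fun U hU => mem_closedBall_zero_iff.mpr hU.1) hδ hδ1
  obtain ⟨FV, -, hVcov, hVcard⟩ := exists_finset_isCover_card_le
    (A := {V : ι → EuclideanSpace ℝ n | ‖V‖ ≤ 1 ∧ PairwiseOrthogonal V})
    (fun V hV => mem_closedBall_zero_iff.mpr hV.1) hδ hδ1
  simp only [finrank_euclideanSpace, Module.finrank_pi_fintype, Finset.sum_const, card_univ,
    smul_eq_mul, h3δ] at hσcard hUcard hVcard
  refine ⟨(Fσ ×ˢ FU ×ˢ FV).image fun p => outerSum p.1 p.2.1 p.2.2, ?_, ?_⟩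
  · calc (#((Fσ ×ˢ FU ×ˢ FV).image fun p => outerSum p.1 p.2.1 p.2.2) : ℝ)
        ≤ #Fσ * (#FU * #FV) := by exact_mod_cast card_image_le.trans_eq (by simp [card_product])
      _ ≤ (9 / ε) ^ Fintype.card ι * ((9 / ε) ^ (Fintype.card ι * Fintype.card m) *
          (9 / ε) ^ (Fintype.card ι * Fintype.card n)) := by gcongr
      _ = _ := by rw [← pow_add, ← pow_add]; ring_nf
  · intro σ U V hσ hU hV hUo hVo
    obtain ⟨σ', hσ'F, hσσ'⟩ := hσcov.exists_norm_sub_le (mem_closedBall_zero_iff.mpr hσ)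
    obtain ⟨U', hU'F, hUU'⟩ := hUcov.exists_norm_sub_le ⟨hU, hUo⟩
    obtain ⟨V', hV'F, hVV'⟩ := hVcov.exists_norm_sub_le ⟨hV, hVo⟩
    refine ⟨outerSum σ' U' V', mem_image.mpr ⟨(σ', U', V'),
      mem_product.mpr ⟨hσ'F, mem_product.mpr ⟨hU'F, hV'F⟩⟩, rfl⟩, ?_⟩
    calc ‖outerSum σ U V - outerSum σ' U' V'‖ ≤ ‖σ - σ'‖ + ‖σ'‖ * (‖U - U'‖ + ‖V - V'‖) :=
          norm_outerSum_sub_outerSum_le hU hV (hFU hU'F).1 hVo (hFU hU'F).2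
      _ ≤ δ + 1 * (δ + δ) := by
          gcongr
          exact mem_closedBall_zero_iff.mp (hFσ hσ'F)
      _ = ε := by change ε / 3 + 1 * (ε / 3 + ε / 3) = ε; ring

theorem low_rank_unit_ball_covering_general
    (N M R : ℕ)
    (ε : ℝ) (hε0 : 0 < ε) (hε1 : ε ≤ 1) :
    ∃ Sε : Finset (Matrix (Fin N) (Fin M) ℝ),
      (Sε.card : ℝ) ≤ (9 / ε) ^ ((N + M + 1) * R) ∧
      ∀ Θ : Matrix (Fin N) (Fin M) ℝ, Θ.rank ≤ R → frobNorm Θ ≤ 1 →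
        ∃ Θ' ∈ Sε, frobNorm (Θ - Θ') ≤ ε := by
  obtain ⟨S, hS, hnet⟩ := exists_finset_outerSum_net (ι := Fin R) (m := Fin N) (n := Fin M) hε0 hε1
  refine ⟨S, by simpa using hS, fun Θ hrank hΘ => ?_⟩
  rw [frobNorm_eq_norm] at hΘ
  obtain ⟨σ, U, V, hσ, hU, hV, hUo, hVo, rfl⟩ :=
    Θ.exists_outerSum_eq_of_rank_le (κ := Fin R) (by simpa using hrank)
  simp_rw [frobNorm_eq_norm]
  exact hnet σ U V (hσ.trans_le hΘ) hU hV hUo hVo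

/-- Covering number bound for the set `S` of `N × M` matrices of rank at most `R` and
Frobenius norm at most `1`: for `0 < ε ≤ 1` there is an `ε`-net `S^ε` of `S` in the
Frobenius norm with `|S^ε| ≤ (9/ε)^{(N+M+1)R}`. -/
theorem low_rank_unit_ball_covering
    (N M R : ℕ) (hN : 1 ≤ N) (hM : 1 ≤ M) (hR : 1 ≤ R)
    (ε : ℝ) (hε0 : 0 < ε) (hε1 : ε ≤ 1) :
    ∃ Sε : Finset (Matrix (Fin N) (Fin M) ℝ),
      (Sε.card : ℝ) ≤ (9 / ε) ^ ((N + M + 1) * R) ∧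
      ∀ Θ : Matrix (Fin N) (Fin M) ℝ, Θ.rank ≤ R → frobNorm Θ ≤ 1 →
        ∃ Θ' ∈ Sε, frobNorm (Θ - Θ') ≤ ε :=
  low_rank_unit_ball_covering_general N M R ε hε0 hε1
end
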